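/- arXiv:1610.07868 — 6 statements merged into one kernel-verified Lean document; each statement's English description precedes it below -/
import Mathlib

section
/- In the group L = ⟨a_1,…,a_M, b_1,…,b_N | b_1^2,…,b_N^2⟩ (the free product of M copies of ℤ and N copies of C_2) with symmetric generating set X = {a_1^{±1},…,a_M^{±1}, b_1,…,b_N}, the number of cyclically reduced words of length k > 0 is (2M+N−1)^k + (−1)^k (M+N−1) + M. -/
/-- The generating alphabet of `L = ⟨a_1,…,a_M, b_1,…,b_N | b_j^2⟩`:
`inl i` is `a_i`, `inr (inl i)` is `a_i⁻¹`, and `inr (inr j)` is `b_j`. -/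
def Letter (M N : ℕ) : Type := Fin M ⊕ (Fin M ⊕ Fin N)

/-- Formal inversion of a letter: it swaps `a_i` and `a_i⁻¹` and fixes each `b_j`. -/
def linv {M N : ℕ} : Letter M N → Letter M N
  | .inl i => .inr (.inl i)
  | .inr (.inl i) => .inl i
  | .inr (.inr j) => .inr (.inr j)

/-! A cyclically reduced word of length `k` is a closed walk of length `k` in the digraph on the
`n = 2M + N` letters with an edge `x → y` whenever `y ≠ x⁻¹`, so there are `tr Bᵏ` of them, where
`B = J - P`, `J` is the all-ones matrix and `P` the permutation matrix of `x ↦ x⁻¹`.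
From `PJ = JP = J` and `J² = nJ` one gets `Bᵏ = (-1)ᵏ Pᵏ + cₖ J` with `n cₖ = (n-1)ᵏ - (-1)ᵏ`,
and since inversion is an involution, `tr Pᵏ` is `n` for even `k` and the number `N` of
self-inverse letters for odd `k`. -/

open Matrix

theorem Fintype.sum_subtype_eq_sum_ite {α M : Type*} [AddCommMonoid M] [Fintype α]
    (p : α → Prop) [DecidablePred p] (f : α → M) :
    ∑ z : {z // p z}, f z = ∑ z, if p z then f z else 0 := by
  rw [← Finset.sum_filter]
  exact (Finset.sum_subtype _ (by simp) f).symm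

section RelWalk

variable {α : Type*} (R : α → α → Prop)

instance List.finite_subtype_length_eq_and [Finite α] (k : ℕ) (P : List α → Prop) :
    Finite {w : List α // w.length = k ∧ P w} :=
  ((List.finite_length_eq α k).subset fun _ hw => hw.1).to_subtype

/-- Walks `x = x₀, x₁, …, x_k = y` along `R`, recorded by the list `[x₁, …, x_k]`. -/
def RelWalk (k : ℕ) (x y : α) : Type _ :=
  {w : List α // w.length = k ∧ (x :: w).IsChain R ∧ (x :: w).getLast (List.cons_ne_nil x w) = y}

instance [Finite α] (k : ℕ) (x y : α) : Finite (RelWalk R k x y) :=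
  List.finite_subtype_length_eq_and k _

def RelWalk.consEquiv (k : ℕ) (x y : α) :
    RelWalk R (k + 1) x y ≃ Σ z : {z // R x z}, RelWalk R k z y where
  toFun
    | ⟨[], h⟩ => absurd h.1 (by simp)
    | ⟨z :: w, h⟩ =>
      ⟨⟨z, (List.isChain_cons_cons.1 h.2.1).1⟩,
        ⟨w, by simpa using h.1, (List.isChain_cons_cons.1 h.2.1).2, by simpa using h.2.2⟩⟩
  invFun
    | ⟨z, w⟩ =>
      ⟨z :: w.1, by simp [w.2.1], List.isChain_cons_cons.2 ⟨z.2, w.2.2.1⟩, by simpa using w.2.2.2⟩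
  left_inv
    | ⟨[], h⟩ => absurd h.1 (by simp)
    | ⟨_ :: _, _⟩ => rfl
  right_inv _ := rfl

def cyclicChainsEquiv (k : ℕ) :
    {w : List α // w.length = k + 1 ∧ w.IsChain R ∧ ∀ h ∈ w.head?, ∀ l ∈ w.getLast?, R l h} ≃
      Σ x : α, Σ y : {y // R y x}, RelWalk R k x y where
  toFun
    | ⟨[], h⟩ => absurd h.1 (by simp)
    | ⟨x :: w, h⟩ =>
      ⟨x, ⟨(x :: w).getLast (List.cons_ne_nil x w),
          h.2.2 x rfl _ (List.getLast?_eq_some_getLast _)⟩,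
        ⟨w, by simpa using h.1, h.2.1, rfl⟩⟩
  invFun
    | ⟨x, y, w⟩ =>
      ⟨x :: w.1, by simp [w.2.1], w.2.2.1, by
        rintro h ⟨⟩ l hl
        rw [List.getLast?_eq_some_getLast (List.cons_ne_nil x w.1), w.2.2.2,
          Option.mem_some_iff] at hl
        exact hl ▸ y.2⟩
  left_inv
    | ⟨[], h⟩ => absurd h.1 (by simp)
    | ⟨_ :: _, _⟩ => rfl
  right_inv := by
    rintro ⟨x, ⟨y, hyx⟩, ⟨w, h⟩⟩
    obtain rfl : (x :: w).getLast (List.cons_ne_nil x w) = y := h.2.2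
    rfl

variable [Fintype α] [DecidableEq α] [DecidableRel R] (S : Type*) [Semiring S]

def relMatrix : Matrix α α S :=
  of fun x y => if R x y then 1 else 0

theorem card_relWalk_eq_pow_apply (k : ℕ) (x y : α) :
    (Nat.card (RelWalk R k x y) : S) = (relMatrix R S ^ k) x y := by
  induction k generalizing x with
  | zero =>
    rw [pow_zero, one_apply]
    split_ifs with hxy
    · subst hxy
      have hunique : ∀ w : RelWalk R 0 x x, w = ⟨[], rfl, .singleton x, rfl⟩ :=
        fun w => Subtype.ext (List.length_eq_zero_iff.1 w.2.1)
      rw [Nat.card_eq_one_iff_exists.2 ⟨_, hunique⟩, Nat.cast_one]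
    · have : IsEmpty (RelWalk R 0 x y) := ⟨fun ⟨w, hlen, _, hlast⟩ =>
        hxy (by simpa [List.length_eq_zero_iff.1 hlen] using hlast)⟩
      rw [Nat.card_of_isEmpty, Nat.cast_zero]
  | succ k ih =>
    rw [Nat.card_congr (RelWalk.consEquiv R k x y), Nat.card_sigma, Nat.cast_sum, pow_succ',
      mul_apply, Fintype.sum_subtype_eq_sum_ite (R x) fun z => (Nat.card (RelWalk R k z y) : S)]
    simp [ih, relMatrix, ite_mul]

theorem card_cyclicChains_eq_trace_pow (k : ℕ) :
    (Nat.card {w : List α // w.length = k + 1 ∧ w.IsChain R ∧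
        ∀ h ∈ w.head?, ∀ l ∈ w.getLast?, R l h} : S) = trace (relMatrix R S ^ (k + 1)) := by
  rw [Nat.card_congr (cyclicChainsEquiv R k), Nat.card_sigma, Nat.cast_sum, trace]
  refine Finset.sum_congr rfl fun x _ => ?_
  rw [Nat.card_sigma, Nat.cast_sum, diag_apply, pow_succ, mul_apply,
    Fintype.sum_subtype_eq_sum_ite (R · x) fun y => (Nat.card (RelWalk R k x y) : S)]
  simp [card_relWalk_eq_pow_apply, relMatrix, mul_ite]

end RelWalk

section OnesMinusPerm

variable {α : Type*} [Fintype α] (S : Type*)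

def onesMatrix [One S] : Matrix α α S := of fun _ _ => 1

theorem trace_onesMatrix [AddCommMonoidWithOne S] :
    trace (onesMatrix S : Matrix α α S) = Fintype.card α := by
  simp [trace, onesMatrix]

theorem onesMatrix_mul_onesMatrix [NonAssocSemiring S] :
    (onesMatrix S : Matrix α α S) * onesMatrix S = (Fintype.card α : S) • onesMatrix S := by
  ext x y
  simp [onesMatrix, mul_apply]

variable [DecidableEq α] (σ : Equiv.Perm α)

theorem permMatrix_mul_onesMatrix [NonAssocSemiring S] :
    σ.permMatrix S * onesMatrix S = onesMatrix S := by
  rw [PEquiv.toMatrix_toPEquiv_mul]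
  rfl

theorem onesMatrix_mul_permMatrix [NonAssocSemiring S] :
    onesMatrix S * σ.permMatrix S = onesMatrix S := by
  rw [PEquiv.mul_toMatrix_toPEquiv]
  rfl

theorem permMatrix_pow [Semiring S] (k : ℕ) :
    σ.permMatrix S ^ k = (σ ^ k).permMatrix S := by
  induction k with
  | zero => simp
  | succ k ih => rw [pow_succ', ih, pow_succ, permMatrix_mul]

variable {S} [CommRing S]

theorem exists_pow_onesMatrix_sub_permMatrix (k : ℕ) :
    ∃ c : S,
      (onesMatrix S - σ.permMatrix S) ^ k = (-1) ^ k • σ.permMatrix S ^ k + c • onesMatrix S ∧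
        (Fintype.card α : S) * c = (Fintype.card α - 1) ^ k - (-1) ^ k := by
  induction k with
  | zero => exact ⟨0, by simp, by simp⟩
  | succ k ih =>
    obtain ⟨c, hpow, hc⟩ := ih
    refine ⟨(Fintype.card α - 1) * c + (-1) ^ k, ?_,
      by linear_combination (Fintype.card α - 1 : S) * hc⟩
    rw [pow_succ, hpow, add_mul, smul_mul_assoc, smul_mul_assoc, mul_sub, mul_sub, ← pow_succ,
      permMatrix_pow, permMatrix_mul_onesMatrix, onesMatrix_mul_onesMatrix,
      onesMatrix_mul_permMatrix]
    module

theorem trace_pow_onesMatrix_sub_permMatrix (k : ℕ) :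
    trace ((onesMatrix S - σ.permMatrix S) ^ k) =
      ((Fintype.card α : S) - 1) ^ k - (-1) ^ k +
        (-1) ^ k * ((Function.fixedPoints (⇑σ)^[k]).ncard : S) := by
  obtain ⟨c, hpow, hc⟩ := exists_pow_onesMatrix_sub_permMatrix (S := S) σ k
  rw [hpow, trace_add, trace_smul, trace_smul, permMatrix_pow, trace_permutation,
    Equiv.Perm.coe_pow, trace_onesMatrix, smul_eq_mul, mul_comm c, hc]
  ring

end OnesMinusPerm

theorem relMatrix_ne_eq_onesMatrix_sub_permMatrix {α : Type*} [Fintype α] [DecidableEq α]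
    {S : Type*} [Ring S] (σ : Equiv.Perm α) :
    relMatrix (fun x y => y ≠ σ x) S = onesMatrix S - σ.permMatrix S := by
  ext x y
  by_cases h : σ x = y <;> simp [relMatrix, onesMatrix, h, Ne.symm]

theorem card_cyclically_reduced {α : Type*} [Fintype α] [DecidableEq α] (σ : Equiv.Perm α)
    (k : ℕ) :
    (Nat.card {w : List α // w.length = k + 1 ∧ w.IsChain (fun x y => y ≠ σ x) ∧
        ∀ h ∈ w.head?, ∀ l ∈ w.getLast?, h ≠ σ l} : ℤ) =
      ((Fintype.card α : ℤ) - 1) ^ (k + 1) - (-1) ^ (k + 1) +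
        (-1) ^ (k + 1) * ((Function.fixedPoints (⇑σ)^[k + 1]).ncard : ℤ) := by
  refine (card_cyclicChains_eq_trace_pow _ ℤ k).trans ?_
  rw [relMatrix_ne_eq_onesMatrix_sub_permMatrix, trace_pow_onesMatrix_sub_permMatrix]

instance (M N : ℕ) : Fintype (Letter M N) := inferInstanceAs (Fintype (Fin M ⊕ (Fin M ⊕ Fin N)))

instance (M N : ℕ) : DecidableEq (Letter M N) :=
  inferInstanceAs (DecidableEq (Fin M ⊕ (Fin M ⊕ Fin N)))

theorem linv_involutive (M N : ℕ) : Function.Involutive (linv : Letter M N → Letter M N) := by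
  rintro (i | i | j) <;> rfl

theorem card_letter (M N : ℕ) : Fintype.card (Letter M N) = 2 * M + N := by
  change Fintype.card (Fin M ⊕ (Fin M ⊕ Fin N)) = _
  simp only [Fintype.card_sum, Fintype.card_fin]
  ring

def Letter.b {M N : ℕ} (j : Fin N) : Letter M N := .inr (.inr j)

theorem fixedPoints_linv (M N : ℕ) :
    Function.fixedPoints (linv : Letter M N → Letter M N) = Set.range Letter.b := by
  ext x
  match x with
  | .inl _ => exact ⟨fun h => (nomatch h), fun ⟨_, h⟩ => (nomatch h)⟩
  | .inr (.inl _) => exact ⟨fun h => (nomatch h), fun ⟨_, h⟩ => (nomatch h)⟩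
  | .inr (.inr j) => exact ⟨fun _ => ⟨j, rfl⟩, fun _ => rfl⟩

theorem ncard_fixedPoints_linv (M N : ℕ) :
    (Function.fixedPoints (linv : Letter M N → Letter M N)).ncard = N := by
  rw [fixedPoints_linv, Set.ncard_range_of_injective, Nat.card_fin]
  intro i j h
  injection h with h
  injection h

/-- in the free product of `M` copies of `ℤ` and `N` copies of `C_2`, with
the standard symmetric generating set of size `2M+N`, the number of cyclically reduced
words of length `k > 0` is `(2M+N-1)^k + (-1)^k (M+N-1) + M`.  A word is reduced if no
letter is followed by its formal inverse, and cyclically reduced if moreover its first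
letter is not the formal inverse of its last letter. -/
theorem stmt3 (M N k : ℕ) (hk : 0 < k) :
    (Nat.card {w : List (Letter M N) //
        w.length = k ∧
        List.Chain' (fun x y => y ≠ linv x) w ∧
        ∀ h ∈ w.head?, ∀ l ∈ w.getLast?, h ≠ linv l} : ℤ)
      = (2 * (M : ℤ) + N - 1) ^ k + (-1) ^ k * ((M : ℤ) + N - 1) + M := by
  obtain ⟨k, rfl⟩ := Nat.exists_eq_add_one_of_ne_zero hk.ne'
  have hinv := linv_involutive M N
  refine (card_cyclically_reduced (hinv.toPerm linv) k).trans ?_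
  rw [Function.Involutive.coe_toPerm, card_letter]
  rcases Nat.even_or_odd (k + 1) with hpar | hpar
  · rw [hinv.iterate_even hpar, Function.fixedPoints_id, Set.ncard_univ, Nat.card_eq_fintype_card,
      card_letter, hpar.neg_one_pow]
    push_cast
    ring
  · rw [hinv.iterate_odd hpar, ncard_fixedPoints_linv, hpar.neg_one_pow]
    push_cast
    ring
end

section
/- In the wreath product G ≀ L, two elements (η, b) and (η', b') are conjugate if and only if there exists d ∈ L with b' = d^{-1} b d such that for every right coset ⟨b⟩t of the cyclic subgroup ⟨b⟩ in L, the coset products agree: when b has infinite order, Π_{k=−∞}^{∞} η(b^{-k} t) = Π_{k=−∞}^{∞} η'^d(b^{-k} t) (finite products since supports are finite); when b has finite order K, the products Π_{k=0}^{K−1} η(b^{-k} t) and Π_{k=0}^{K−1} η'^d(b^{-k} t) are conjugate in G. -/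
/-- Wreath product multiplication `(η,m)(θ,n) = (η · θ^m, mn)` with `θ^m(l) = θ(m⁻¹l)`. -/
def wrMul {G L : Type*} [Group G] [Group L] :
    ((L → G) × L) → ((L → G) × L) → ((L → G) × L) :=
  fun p q => (p.1 * fun l => q.1 (p.2⁻¹ * l), p.2 * q.2)

/-- The truncated ordered product `Π_{k=-N}^{N} η(b^{-k} t)`, taken in increasing
order of `k`. For finitely supported `η` this stabilizes to `π_{⟨b⟩t}(η)` as `N → ∞`. -/
def zProd {G L : Type*} [Group G] [Group L] (η : L → G) (b t : L) (N : ℕ) : G :=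
  (((List.range (2 * N + 1)).map fun i => η (b ^ ((N : ℤ) - (i : ℤ)) * t)).prod)

/-- The ordered product `Π_{k=0}^{K-1} η(b^{-k} t)`. -/
def finProd {G L : Type*} [Group G] [Group L] (η : L → G) (b t : L) (K : ℕ) : G :=
  (((List.range K).map fun k => η (b ^ (-(k : ℤ)) * t)).prod)

/-!
Writing a conjugator as `(ξ, e)` and putting `d = e⁻¹`, `ζ = ξ(d⁻¹ ·)`, conjugacy amounts to
`b' = d⁻¹bd` together with the twisted equation `ζ(l) η(l) = θ(l) ζ(b⁻¹l)` for `θ = η'(d⁻¹ ·)`.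
Along a coset `⟨b⟩t`, parametrised by `k ↦ b⁻ᵏt`, it reads `u k = (w k)⁻¹ v k w (k + 1)`, so
products of consecutive values telescope: over long windows the products of `u` and `v` agree
(infinite order: `w` is `1` at both ends), and over one period they are conjugate by `w 0`
(finite order: `w` is periodic). Conversely, `w k = (v_0 ⋯ v_{k-1})⁻¹ g (u_0 ⋯ u_{k-1})` solves
the equation, and the coset condition is exactly what makes it close up (vanish far out, resp.
be periodic). Solutions chosen coset by coset, with `ζ = 1` on the cosets avoiding the supports,
glue to a finitely supported `ζ`.
-/

namespace WreathConjugacy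

open Function

section Sequences

variable {G : Type*} [Group G]

/-- `orderedProd u m n = u m * u (m + 1) * ⋯ * u (m + n - 1)`. -/
def orderedProd (u : ℤ → G) (m : ℤ) (n : ℕ) : G :=
  ((List.range n).map fun i : ℕ => u (m + i)).prod

variable {u v w : ℤ → G}

@[simp]
lemma orderedProd_zero (u : ℤ → G) (m : ℤ) : orderedProd u m 0 = 1 := rfl

lemma orderedProd_succ (u : ℤ → G) (m : ℤ) (n : ℕ) :
    orderedProd u m (n + 1) = orderedProd u m n * u (m + n) := by
  simp [orderedProd, List.range_succ]

lemma orderedProd_add (u : ℤ → G) (m : ℤ) (n₁ n₂ : ℕ) :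
    orderedProd u m (n₁ + n₂) = orderedProd u m n₁ * orderedProd u (m + n₁) n₂ := by
  induction n₂ with
  | zero => simp
  | succ n ih =>
    rw [← add_assoc, orderedProd_succ, ih, orderedProd_succ, mul_assoc]
    push_cast
    rw [add_assoc]

lemma orderedProd_eq_one {m : ℤ} {n : ℕ} (h : ∀ i < n, u (m + i) = 1) :
    orderedProd u m n = 1 := by
  induction n with
  | zero => rfl
  | succ n ih =>
    rw [orderedProd_succ, ih fun i hi => h i (by omega), h n (by omega), mul_one]

lemma orderedProd_window_eq {M N : ℕ} (hu : ∀ k : ℤ, M < k.natAbs → u k = 1) (hMN : M ≤ N) :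
    orderedProd u (-N) (2 * N + 1) = orderedProd u (-M) (2 * M + 1) := by
  obtain ⟨d, rfl⟩ := Nat.exists_eq_add_of_le hMN
  have hones : ∀ m : ℤ, (∀ i < d, M < (m + i).natAbs) → orderedProd u m d = 1 :=
    fun m hm => orderedProd_eq_one fun i hi => hu _ (hm i hi)
  rw [show 2 * (M + d) + 1 = d + ((2 * M + 1) + d) by ring, orderedProd_add, orderedProd_add,
    hones _ (fun i hi => by omega), hones _ (fun i hi => by omega)]
  push_cast
  rw [one_mul, mul_one, show -((M : ℤ) + d) + d = -M by ring]

lemma mul_orderedProd_of_twisted (h : ∀ k, w k * u k = v k * w (k + 1)) (m : ℤ) (n : ℕ) :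
    w m * orderedProd u m n = orderedProd v m n * w (m + n) := by
  induction n with
  | zero => simp
  | succ n ih =>
    rw [orderedProd_succ, orderedProd_succ, ← mul_assoc, ih, mul_assoc, h, ← mul_assoc]
    push_cast
    rw [add_assoc]

lemma twisted_orderedProd_succ (u v : ℤ → G) (c : G) (m : ℤ) (n : ℕ) :
    (orderedProd v m n)⁻¹ * c * orderedProd u m n * u (m + n) =
      v (m + n) * ((orderedProd v m (n + 1))⁻¹ * c * orderedProd u m (n + 1)) := by
  rw [orderedProd_succ, orderedProd_succ]
  group

theorem exists_twisted_of_window_eq {M : ℕ} (hu : ∀ k : ℤ, M < k.natAbs → u k = 1)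
    (hv : ∀ k : ℤ, M < k.natAbs → v k = 1)
    (h : orderedProd u (-M) (2 * M + 1) = orderedProd v (-M) (2 * M + 1)) :
    ∃ w : ℤ → G, (mulSupport w).Finite ∧ ∀ k, w k * u k = v k * w (k + 1) := by
  set W : ℕ → G := fun n => (orderedProd v (-M) n)⁻¹ * orderedProd u (-M) n with hW
  refine ⟨fun k => W (k + M).toNat, (Set.finite_Icc (-(M : ℤ)) M).subset ?_, fun k => ?_⟩
  · intro k hk
    by_contra hkM
    apply hk
    rcases (show k < -M ∨ M < k by simp only [Set.mem_Icc] at hkM; omega) with hlt | hgt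
    · simp [hW, Int.toNat_of_nonpos (show k + M ≤ 0 by omega)]
    · obtain ⟨d, hd⟩ : ∃ d : ℕ, (k + M).toNat = (2 * M + 1) + d := ⟨(k - M - 1).toNat, by omega⟩
      have htail : ∀ u' : ℤ → G, (∀ k : ℤ, M < k.natAbs → u' k = 1) →
          orderedProd u' (-M + (2 * M + 1 : ℕ)) d = 1 :=
        fun u' hu' => orderedProd_eq_one fun i _ => hu' _ (by omega)
      simp only [hW, hd, orderedProd_add, htail u hu, htail v hv, h]
      group
  · by_cases hk : 0 ≤ k + M
    · have hsucc : (k + 1 + M).toNat = (k + M).toNat + 1 := by omega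
      have hidx : -(M : ℤ) + (k + M).toNat = k := by omega
      simpa only [hsucc, hidx, mul_one] using twisted_orderedProd_succ u v 1 (-M) (k + M).toNat
    · show W _ * u k = v k * W _
      rw [hu k (by omega), hv k (by omega), Int.toNat_of_nonpos (by omega),
        Int.toNat_of_nonpos (by omega), mul_one, one_mul]

theorem exists_periodic_twisted_of_conj {K : ℕ} (hK : 0 < K) (hu : Periodic u K)
    (hv : Periodic v K) (g : G) (hg : g * orderedProd u 0 K = orderedProd v 0 K * g) :
    ∃ w : ℤ → G, Periodic w K ∧ ∀ k, w k * u k = v k * w (k + 1) := by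
  set W : ℕ → G := fun n => (orderedProd v 0 n)⁻¹ * g * orderedProd u 0 n with hW
  have hWK : W K = W 0 := by
    simp only [hW, mul_assoc, hg, orderedProd_zero, inv_one, one_mul, mul_one]
    group
  have hK' : (0 : ℤ) < K := by exact_mod_cast hK
  refine ⟨fun k => W (k % K).toNat, fun k => by simp, fun k => ?_⟩
  have hmod : 0 ≤ k % K ∧ k % K < K := ⟨Int.emod_nonneg _ hK'.ne', Int.emod_lt_of_pos _ hK'⟩
  have hnext : W ((k + 1) % K).toNat = W ((k % K).toNat + 1) := by
    rw [← Int.emod_add_emod]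
    rcases (show k % K + 1 < K ∨ k % K + 1 = K by omega) with hlt | heq
    · rw [Int.emod_eq_of_lt (by omega) hlt]
      congr 1
      omega
    · rw [heq, Int.emod_self, show (k % K).toNat + 1 = K by omega, hWK, Int.toNat_zero]
  have hreduce : ∀ f : ℤ → G, Periodic f K → f k = f (0 + ((k % K).toNat : ℤ)) := by
    intro f hf
    have := hf.sub_int_mul_eq (x := k) (k / K)
    rw [Int.cast_id] at this
    rw [zero_add, Int.toNat_of_nonneg hmod.1, Int.emod_def, mul_comm, this]
  show W _ * u k = v k * W _
  rw [hnext, hreduce u hu, hreduce v hv]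
  exact twisted_orderedProd_succ u v g 0 _

end Sequences

section Cosets

variable {G L : Type*} [Group G] [Group L]

def cosetSeq (η : L → G) (b t : L) (k : ℤ) : G := η (b ^ (-k) * t)

-- `zProd` and `finProd` index by `List.range _` coerced to `List ℤ`, a monadic bind.
omit [Group G] in
lemma map_range_natCast (l : List ℕ) (f : ℤ → G) :
    List.map f (l : List ℤ) = List.map (fun i : ℕ => f i) l := by
  induction l with
  | nil => rfl
  | cons a l ih => exact congrArg (f a :: ·) ih

lemma zProd_eq_orderedProd (η : L → G) (b t : L) (N : ℕ) :
    zProd η b t N = orderedProd (cosetSeq η b t) (-N) (2 * N + 1) := by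
  rw [zProd, map_range_natCast, orderedProd]
  refine congrArg List.prod (List.map_congr_left fun i _ => ?_)
  rw [cosetSeq, neg_add, neg_neg, sub_eq_add_neg]

lemma finProd_eq_orderedProd (η : L → G) (b t : L) (K : ℕ) :
    finProd η b t K = orderedProd (cosetSeq η b t) 0 K := by
  rw [finProd, map_range_natCast, orderedProd]
  refine congrArg List.prod (List.map_congr_left fun i _ => ?_)
  rw [cosetSeq, zero_add]

omit [Group G] in
lemma inv_mul_zpow_neg_mul (b t : L) (k : ℤ) : b⁻¹ * (b ^ (-k) * t) = b ^ (-(k + 1)) * t := by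
  rw [← mul_assoc, ← zpow_neg_one, ← zpow_add, neg_add, add_comm]

lemma cosetSeq_twisted {η θ ζ : L → G} {b : L} (h : ∀ l, ζ l * η l = θ l * ζ (b⁻¹ * l))
    (t : L) (k : ℤ) :
    cosetSeq ζ b t k * cosetSeq η b t k = cosetSeq θ b t k * cosetSeq ζ b t (k + 1) := by
  rw [cosetSeq, cosetSeq, cosetSeq, cosetSeq, h, inv_mul_zpow_neg_mul]

omit [Group G] in
lemma cosetSeq_periodic (η : L → G) (b t : L) : Periodic (cosetSeq η b t) (orderOf b) := by
  intro k
  rw [cosetSeq, cosetSeq, neg_add, zpow_add, zpow_neg (n := (orderOf b : ℤ)), zpow_natCast,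
    pow_orderOf_eq_one, inv_one, mul_one]

omit [Group G] in
lemma injective_zpow_neg_mul {b : L} (h0 : orderOf b = 0) (t : L) :
    Injective fun k : ℤ => b ^ (-k) * t := fun _ _ h =>
  neg_injective <| injective_zpow_iff_not_isOfFinOrder.2 (orderOf_eq_zero_iff.1 h0)
    (mul_right_cancel h)

lemma finite_mulSupport_cosetSeq {η : L → G} {b : L} (h0 : orderOf b = 0)
    (hη : (mulSupport η).Finite) (t : L) : (mulSupport (cosetSeq η b t)).Finite :=
  hη.preimage (injective_zpow_neg_mul h0 t).injOn

lemma exists_natAbs_bound {u : ℤ → G} (hu : (mulSupport u).Finite) :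
    ∃ M : ℕ, ∀ k : ℤ, M < k.natAbs → u k = 1 := by
  obtain ⟨M, hM⟩ := (hu.image Int.natAbs).bddAbove
  exact ⟨M, fun k hk => by_contra fun hne => absurd (hM ⟨k, hne, rfl⟩) (not_le.2 hk)⟩

theorem cosetwise_of_twisted {η θ ζ : L → G} {b : L} (hζ : (mulSupport ζ).Finite)
    (h : ∀ l, ζ l * η l = θ l * ζ (b⁻¹ * l)) (t : L) :
    (orderOf b = 0 → ∃ N₀ : ℕ, ∀ N ≥ N₀, zProd η b t N = zProd θ b t N) ∧
    (orderOf b ≠ 0 →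
      ∃ g : G, g * finProd η b t (orderOf b) = finProd θ b t (orderOf b) * g) := by
  have htel := mul_orderedProd_of_twisted (cosetSeq_twisted h t)
  refine ⟨fun h0 => ?_, fun _ => ⟨cosetSeq ζ b t 0, ?_⟩⟩
  · obtain ⟨M, hM⟩ := exists_natAbs_bound (finite_mulSupport_cosetSeq h0 hζ t)
    refine ⟨M + 1, fun N hN => ?_⟩
    have := htel (-N) (2 * N + 1)
    rw [hM _ (by omega), hM _ (by push_cast; omega), one_mul, mul_one] at this
    rw [zProd_eq_orderedProd, zProd_eq_orderedProd, this]
  · rw [finProd_eq_orderedProd, finProd_eq_orderedProd, htel, zero_add,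
      (cosetSeq_periodic ζ b t).eq]

noncomputable def cosetRep (b l : L) : L :=
  (Quotient.mk (QuotientGroup.rightRel (Subgroup.zpowers b)) l).out

omit [Group G] in
lemma cosetRep_zpow_mul (b l : L) (k : ℤ) : cosetRep b (b ^ k * l) = cosetRep b l := by
  refine congrArg Quotient.out (Quotient.sound (QuotientGroup.rightRel_apply.2 ?_))
  rw [mul_inv_rev, mul_inv_cancel_left, ← zpow_neg]
  exact Subgroup.zpow_mem_zpowers b _

omit [Group G] in
lemma exists_eq_zpow_neg_mul_cosetRep (b l : L) : ∃ k : ℤ, l = b ^ (-k) * cosetRep b l := by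
  obtain ⟨k, hk⟩ := Subgroup.mem_zpowers_iff.1 (QuotientGroup.rightRel_apply.1
    (Quotient.exact (Quotient.out_eq (Quotient.mk (QuotientGroup.rightRel
      (Subgroup.zpowers b)) l))))
  exact ⟨-k, by rw [neg_neg, hk, cosetRep, inv_mul_cancel_right]⟩

structure IsCosetConjugator (η θ : L → G) (b t : L) (w : ℤ → G) : Prop where
  twisted : ∀ k, w k * cosetSeq η b t k = cosetSeq θ b t k * w (k + 1)
  descends : ∀ j k : ℤ, b ^ (-j) * t = b ^ (-k) * t → w j = w k
  finite_image : ((fun k : ℤ => b ^ (-k) * t) '' mulSupport w).Finite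

theorem exists_twisted_of_cosetwise {η θ : L → G} {b : L} (hη : (mulSupport η).Finite)
    (hθ : (mulSupport θ).Finite) (hw : ∀ t, ∃ w : ℤ → G, IsCosetConjugator η θ b t w) :
    ∃ ζ : L → G, (mulSupport ζ).Finite ∧ ∀ l, ζ l * η l = θ l * ζ (b⁻¹ * l) := by
  classical
  choose w hw using hw
  choose c hc using exists_eq_zpow_neg_mul_cosetRep b
  set S := mulSupport η ∪ mulSupport θ
  set meets : L → Prop := fun l => ∃ s ∈ S, cosetRep b s = cosetRep b l
  have hrep_inv : ∀ l, cosetRep b (b⁻¹ * l) = cosetRep b l := fun l => by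
    rw [← zpow_neg_one, cosetRep_zpow_mul]
  refine ⟨fun l => if meets l then w (cosetRep b l) (c l) else 1, ?_, fun l => ?_⟩
  · refine ((hη.union hθ).biUnion fun s _ => (hw (cosetRep b s)).finite_image).subset ?_
    intro l hl
    have hm : meets l := by_contra fun hm => hl (if_neg hm)
    have hwl : w (cosetRep b l) (c l) ≠ 1 := fun h1 => hl ((if_pos hm).trans h1)
    obtain ⟨s, hs, hsl⟩ := hm
    exact Set.mem_biUnion hs (hsl ▸ ⟨c l, hwl, (hc l).symm⟩)
  · have hmeets : meets (b⁻¹ * l) ↔ meets l := by simp only [meets, hrep_inv]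
    by_cases hm : meets l
    · have hstep : w (cosetRep b l) (c (b⁻¹ * l)) = w (cosetRep b l) (c l + 1) := by
        refine (hw _).descends _ _ ?_
        rw [← hrep_inv, ← hc, hrep_inv, ← inv_mul_zpow_neg_mul, ← hc]
      have := (hw (cosetRep b l)).twisted (c l)
      simp only [cosetSeq, ← hc] at this
      simp only [hm, hmeets.2 hm, if_true, hrep_inv, hstep, this]
    · have hl : l ∉ S := fun hS => hm ⟨l, hS, rfl⟩
      simp only [S, Set.mem_union, Function.mem_mulSupport, not_or, not_not] at hl
      simp only [hm, mt hmeets.1 hm, if_false, hl.1, hl.2]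

theorem exists_cosetConjugator_of_zProd_eq {η θ : L → G} {b : L} (h0 : orderOf b = 0)
    (hη : (mulSupport η).Finite) (hθ : (mulSupport θ).Finite) {t : L}
    (h : ∃ N₀ : ℕ, ∀ N ≥ N₀, zProd η b t N = zProd θ b t N) :
    ∃ w : ℤ → G, IsCosetConjugator η θ b t w := by
  obtain ⟨N₀, hN₀⟩ := h
  obtain ⟨Mη, hMη⟩ := exists_natAbs_bound (finite_mulSupport_cosetSeq h0 hη t)
  obtain ⟨Mθ, hMθ⟩ := exists_natAbs_bound (finite_mulSupport_cosetSeq h0 hθ t)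
  set M := max Mη Mθ
  have hu : ∀ k : ℤ, M < k.natAbs → cosetSeq η b t k = 1 := fun k hk => hMη k (by omega)
  have hv : ∀ k : ℤ, M < k.natAbs → cosetSeq θ b t k = 1 := fun k hk => hMθ k (by omega)
  have hwindow := hN₀ (max M N₀) (le_max_right _ _)
  rw [zProd_eq_orderedProd, zProd_eq_orderedProd, orderedProd_window_eq hu (le_max_left _ _),
    orderedProd_window_eq hv (le_max_left _ _)] at hwindow
  obtain ⟨w, hwfin, hw⟩ := exists_twisted_of_window_eq hu hv hwindow
  exact ⟨w, ⟨hw, fun j k hjk => congrArg w (injective_zpow_neg_mul h0 t hjk), hwfin.image _⟩⟩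

theorem exists_cosetConjugator_of_finProd_conj {η θ : L → G} {b : L} (hK : orderOf b ≠ 0)
    {t : L} (h : ∃ g : G, g * finProd η b t (orderOf b) = finProd θ b t (orderOf b) * g) :
    ∃ w : ℤ → G, IsCosetConjugator η θ b t w := by
  obtain ⟨g, hg⟩ := h
  rw [finProd_eq_orderedProd, finProd_eq_orderedProd] at hg
  obtain ⟨w, hwper, hw⟩ := exists_periodic_twisted_of_conj (Nat.pos_of_ne_zero hK)
    (cosetSeq_periodic η b t) (cosetSeq_periodic θ b t) g hg
  refine ⟨w, ⟨hw, fun j k hjk => ?_, ?_⟩⟩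
  · obtain ⟨q, hq⟩ := (zpow_eq_zpow_iff_modEq.1 (mul_right_cancel hjk)).dvd
    rw [show j = k + q * orderOf b by linarith]
    simpa using hwper.int_mul q k
  · refine ((orderOf_pos_iff.1 (Nat.pos_of_ne_zero hK)).finite_zpowers.image (· * t)).subset ?_
    rintro _ ⟨k, -, rfl⟩
    exact ⟨b ^ (-k), Subgroup.zpow_mem_zpowers b _, rfl⟩

theorem exists_twisted_iff_cosetwise {η θ : L → G} {b : L} (hη : (mulSupport η).Finite)
    (hθ : (mulSupport θ).Finite) :
    (∃ ζ : L → G, (mulSupport ζ).Finite ∧ ∀ l, ζ l * η l = θ l * ζ (b⁻¹ * l)) ↔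
      ∀ t : L, (orderOf b = 0 → ∃ N₀ : ℕ, ∀ N ≥ N₀, zProd η b t N = zProd θ b t N) ∧
        (orderOf b ≠ 0 →
          ∃ g : G, g * finProd η b t (orderOf b) = finProd θ b t (orderOf b) * g) := by
  refine ⟨fun ⟨ζ, hζ, h⟩ => cosetwise_of_twisted hζ h, fun h => ?_⟩
  refine exists_twisted_of_cosetwise hη hθ fun t => ?_
  by_cases h0 : orderOf b = 0
  · exact exists_cosetConjugator_of_zProd_eq h0 hη hθ ((h t).1 h0)
  · exact exists_cosetConjugator_of_finProd_conj h0 ((h t).2 h0)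

end Cosets

section Wreath

variable {G L : Type*} [Group G] [Group L]

lemma finite_mulSupport_comp_mul_left {f : L → G} (hf : (mulSupport f).Finite) (a : L) :
    (mulSupport fun l => f (a * l)).Finite :=
  hf.preimage (mul_right_injective a).injOn

theorem wrMul_conj_iff (η η' : L → G) (b b' : L) :
    (∃ x : (L → G) × L, (mulSupport x.1).Finite ∧ wrMul x (η, b) = wrMul (η', b') x) ↔
      ∃ d : L, b' = d⁻¹ * b * d ∧ ∃ ζ : L → G, (mulSupport ζ).Finite ∧
        ∀ l, ζ l * η l = η' (d⁻¹ * l) * ζ (b⁻¹ * l) := by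
  simp only [wrMul, Prod.ext_iff, funext_iff, Pi.mul_apply]
  constructor
  · rintro ⟨⟨ξ, e⟩, hξ, hfun, hbase⟩
    have hb' : b' = e * b * e⁻¹ := by rw [hbase]; group
    refine ⟨e⁻¹, by rw [inv_inv, hb'], fun l => ξ (e * l),
      finite_mulSupport_comp_mul_left hξ e, fun l => ?_⟩
    have h := hfun (e * l)
    simp only [inv_mul_cancel_left] at h
    rw [hb', show (e * b * e⁻¹)⁻¹ * (e * l) = e * (b⁻¹ * l) by group] at h
    simpa only [inv_inv] using h
  · rintro ⟨d, hb', ζ, hζ, h⟩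
    refine ⟨(fun l => ζ (d * l), d⁻¹), finite_mulSupport_comp_mul_left hζ d,
      fun l => ?_, by rw [hb']; group⟩
    have h := h (d * l)
    rw [inv_mul_cancel_left] at h
    simp only [inv_inv]
    rwa [hb', show d * ((d⁻¹ * b * d)⁻¹ * l) = b⁻¹ * (d * l) by group]

end Wreath

end WreathConjugacy

/-- two elements `(η,b)`, `(η',b')` of the restricted wreath product
`G ≀ L` are conjugate iff there is `d ∈ L` with `b' = d⁻¹bd` such that for every right
coset `⟨b⟩t`: if `b` has infinite order the (eventually constant) bi-infinite coset
products of `η` and `η'^d` agree, and if `b` has finite order `K` the coset products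
`Π_{k=0}^{K-1}` of `η` and `η'^d` are conjugate in `G`. -/
theorem stmt7 {G L : Type*} [Group G] [Group L] (η η' : L → G) (b b' : L)
    (hη : (Function.mulSupport η).Finite) (hη' : (Function.mulSupport η').Finite) :
    (∃ x : (L → G) × L, (Function.mulSupport x.1).Finite ∧
        wrMul x (η, b) = wrMul (η', b') x) ↔
    ∃ d : L, b' = d⁻¹ * b * d ∧ ∀ t : L,
      (orderOf b = 0 →
        ∃ N₀ : ℕ, ∀ N ≥ N₀, zProd η b t N = zProd (fun l => η' (d⁻¹ * l)) b t N) ∧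
      (orderOf b ≠ 0 →
        ∃ g : G, g * finProd η b t (orderOf b)
          = finProd (fun l => η' (d⁻¹ * l)) b t (orderOf b) * g) := by
  rw [WreathConjugacy.wrMul_conj_iff]
  exact exists_congr fun d => and_congr_right fun _ =>
    WreathConjugacy.exists_twisted_iff_cosetwise hη
      (WreathConjugacy.finite_mulSupport_comp_mul_left hη' d⁻¹)
end

section
/- Let (η, b) ∈ G ≀ L with b of infinite order, and let ⟨b⟩t_1, …, ⟨b⟩t_k be the right cosets of ⟨b⟩ on which the coset product π_{⟨b⟩t_j}(η) = Π_{k∈ℤ} η(b^{-k} t_j) is nontrivial. Then (η, b) is conjugate in G ≀ L to an element (η', b) such that supp(η') meets each coset ⟨b⟩t_j in exactly one point l_j, with η'(l_j) = π_{⟨b⟩t_j}(η), and supp(η') ⊆ ⟨b⟩t_1 ∪ … ∪ ⟨b⟩t_k. -/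
open Filter Function

section

variable {G L : Type*} [Group G] [Group L] (f : L → G) (b : L)

def tailProd (l : L) (n : ℕ) : G :=
  ((List.range n).map fun i : ℕ => f (b ^ (-(i : ℤ)) * l)).prod

def HasTailProd (T : L → G) : Prop :=
  ∀ l, ∀ᶠ n in atTop, tailProd f b l n = T l

/- The casts `(i : ℤ)` in `zProd` make Lean lift `List.range _` to `List ℤ` through the list
monad, hence the `bind`/`pure` lemmas below. -/
lemma zProd_eq_tailProd (t : L) (N : ℕ) :
    zProd f b t N = tailProd f b (b ^ (N : ℤ) * t) (2 * N + 1) := by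
  simp only [zProd, tailProd, List.pure_def, List.bind_eq_flatMap, ← List.map_eq_flatMap,
    List.map_map]
  refine congrArg List.prod (List.map_congr_left fun i _ => ?_)
  simp only [Function.comp_apply, ← mul_assoc, ← zpow_add, sub_eq_neg_add]

variable {f b}

lemma tailProd_succ (l : L) (n : ℕ) :
    tailProd f b l (n + 1) = tailProd f b l n * f (b ^ (-(n : ℤ)) * l) := by
  simp [tailProd, List.range_succ]

lemma tailProd_succ' (l : L) (n : ℕ) :
    tailProd f b l (n + 1) = f l * tailProd f b (b⁻¹ * l) n := by
  simp only [tailProd, List.range_succ_eq_map, List.map_cons, List.map_map, List.prod_cons]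
  congr 2
  · simp
  · refine List.map_congr_left fun i _ => ?_
    simp only [Function.comp_apply, Nat.cast_succ, neg_add, zpow_add, zpow_neg_one, mul_assoc]

lemma tailProd_eq_one {l : L} {n : ℕ} (h : ∀ i < n, f (b ^ (-(i : ℤ)) * l) = 1) :
    tailProd f b l n = 1 :=
  List.prod_eq_one (by simpa using h)

lemma tailProd_eq_of_le {l : L} {m n : ℕ} (h : ∀ i ≥ m, f (b ^ (-(i : ℤ)) * l) = 1)
    (hmn : m ≤ n) : tailProd f b l n = tailProd f b l m := by
  induction n, hmn using Nat.le_induction with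
  | base => rfl
  | succ n hmn ih => rw [tailProd_succ, ih, h n hmn, mul_one]

lemma tailProd_eq_apply {l : L} {m n : ℕ} (h : ∀ i ≠ m, f (b ^ (-(i : ℤ)) * l) = 1)
    (hmn : m < n) : tailProd f b l n = f (b ^ (-(m : ℤ)) * l) := by
  rw [tailProd_eq_of_le (m := m + 1) (fun i hi => h i (by omega)) hmn, tailProd_succ,
    tailProd_eq_one fun i hi => h i hi.ne, one_mul]

lemma zProd_eq_one {t : L} (h : ∀ k : ℤ, f (b ^ k * t) = 1) (N : ℕ) : zProd f b t N = 1 := by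
  rw [zProd_eq_tailProd]
  exact tailProd_eq_one fun i _ => by rw [← mul_assoc, ← zpow_add]; exact h _

lemma zpow_mul_left_injective (hb : orderOf b = 0) (l : L) : Injective fun k : ℤ => b ^ k * l :=
  (mul_left_injective l).comp (injective_zpow_iff_not_isOfFinOrder.2 (orderOf_eq_zero_iff.1 hb))

lemma eventually_atBot_apply_zpow_mul_eq_one (hb : orderOf b = 0)
    (hf : (mulSupport f).Finite) (l : L) : ∀ᶠ k : ℤ in atBot, f (b ^ k * l) = 1 := by
  have : ∀ᶠ k : ℤ in cofinite, f (b ^ k * l) = 1 :=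
    eventually_cofinite.2 (hf.preimage (zpow_mul_left_injective hb l).injOn)
  rw [Int.cofinite_eq, eventually_sup] at this
  exact this.1

lemma exists_hasTailProd (hb : orderOf b = 0) (hf : (mulSupport f).Finite) :
    ∃ T, HasTailProd f b T := by
  have hstable : ∀ l, ∃ m : ℕ, ∀ i ≥ m, f (b ^ (-(i : ℤ)) * l) = 1 := fun l => by
    obtain ⟨K, hK⟩ := eventually_atBot.1 (eventually_atBot_apply_zpow_mul_eq_one hb hf l)
    exact ⟨(-K).toNat, fun i hi => hK _ (by omega)⟩
  choose m hm using hstable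
  exact ⟨fun l => tailProd f b l (m l),
    fun l => eventually_atTop.2 ⟨m l, fun n hn => tailProd_eq_of_le (hm l) hn⟩⟩

namespace HasTailProd

variable {T : L → G}

lemma apply_eq (hT : HasTailProd f b T) (l : L) : T l = f l * T (b⁻¹ * l) := by
  obtain ⟨n, hl, hbl⟩ :=
    (((tendsto_add_atTop_nat 1).eventually (hT l)).and (hT (b⁻¹ * l))).exists
  rw [← hl, ← hbl, tailProd_succ']

lemma eq_one (hT : HasTailProd f b T) {l : L} (h : ∀ i : ℕ, f (b ^ (-(i : ℤ)) * l) = 1) :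
    T l = 1 := by
  obtain ⟨n, hn⟩ := (hT l).exists
  rw [← hn, tailProd_eq_one fun i _ => h i]

lemma eventually_atBot_eq_one (hT : HasTailProd f b T) (hb : orderOf b = 0)
    (hf : (mulSupport f).Finite) (s : L) :
    ∀ᶠ k : ℤ in atBot, T (b ^ k * s) = 1 := by
  obtain ⟨K, hK⟩ := eventually_atBot.1 (eventually_atBot_apply_zpow_mul_eq_one hb hf s)
  filter_upwards [eventually_le_atBot K] with k hk
  exact hT.eq_one fun i => by rw [← mul_assoc, ← zpow_add]; exact hK _ (by omega)

lemma eventually_eq_zProd (hT : HasTailProd f b T) (hb : orderOf b = 0)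
    (hf : (mulSupport f).Finite) (s : L) :
    ∀ᶠ N : ℕ in atTop, T (b ^ (N : ℤ) * s) = zProd f b s N := by
  obtain ⟨K, hK⟩ := eventually_atBot.1 (eventually_atBot_apply_zpow_mul_eq_one hb hf s)
  filter_upwards [eventually_ge_atTop (-K).toNat] with N hN
  obtain ⟨n, hn, hle⟩ := ((hT _).and (eventually_ge_atTop (2 * N + 1))).exists
  rw [zProd_eq_tailProd, ← hn, tailProd_eq_of_le _ hle]
  intro i hi
  rw [← mul_assoc, ← zpow_add]
  exact hK _ (by omega)

lemma eventually_cofinite_eq {f' T' : L → G} (hT : HasTailProd f b T)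
    (hT' : HasTailProd f' b T') (hb : orderOf b = 0) (hf : (mulSupport f).Finite)
    (hf' : (mulSupport f').Finite) (h : ∀ s, ∀ᶠ N in atTop, zProd f b s N = zProd f' b s N)
    (s : L) : ∀ᶠ k : ℤ in cofinite, T (b ^ k * s) = T' (b ^ k * s) := by
  rw [Int.cofinite_eq, eventually_sup]
  constructor
  · filter_upwards [hT.eventually_atBot_eq_one hb hf s, hT'.eventually_atBot_eq_one hb hf' s]
      with k hk hk'
    rw [hk, hk']
  · obtain ⟨N₀, hN₀⟩ := eventually_atTop.1 <|
      (hT.eventually_eq_zProd hb hf s).and <| (hT'.eventually_eq_zProd hb hf' s).and (h s)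
    filter_upwards [eventually_ge_atTop (N₀ : ℤ)] with k hk
    obtain ⟨N, rfl⟩ := Int.eq_ofNat_of_zero_le (by omega : 0 ≤ k)
    obtain ⟨hN, hN', hNN'⟩ := hN₀ N (by omega)
    rw [hN, hN', hNN']

end HasTailProd

lemma exists_conj_of_eventually_zProd_eq {f' : L → G} (hb : orderOf b = 0)
    (hf : (mulSupport f).Finite) (hf' : (mulSupport f').Finite)
    (h : ∀ s, ∀ᶠ N in atTop, zProd f b s N = zProd f' b s N) :
    ∃ x : (L → G) × L, (mulSupport x.1).Finite ∧ wrMul x (f, b) = wrMul (f', b) x := by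
  obtain ⟨T, hT⟩ := exists_hasTailProd hb hf
  obtain ⟨T', hT'⟩ := exists_hasTailProd hb hf'
  set ξ : L → G := fun l => T' l * (T l)⁻¹
  refine ⟨(ξ, 1), ?_, ?_⟩
  · have hcoset : ∀ s, {k : ℤ | ξ (b ^ k * s) ≠ 1}.Finite := fun s =>
      eventually_cofinite.1 <| (hT.eventually_cofinite_eq hT' hb hf hf' h s).mono
        fun k hk => by simp only [ξ, hk, mul_inv_cancel]
    refine ((hf.union hf').biUnion fun s _ => (hcoset s).image fun k => b ^ k * s).subset
      fun l hl => ?_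
    obtain ⟨k, hk⟩ : ∃ k : ℤ, b ^ k * l ∈ mulSupport f ∪ mulSupport f' := by
      by_contra! hno
      simp only [Set.mem_union, mem_mulSupport, not_or, not_not] at hno
      exact hl (by simp [ξ, hT.eq_one fun i => (hno _).1, hT'.eq_one fun i => (hno _).2])
    have hl' : b ^ (-k) * (b ^ k * l) = l := by group
    exact Set.mem_biUnion hk ⟨-k, by rwa [Set.mem_ofPred_eq, hl'], hl'⟩
  · refine Prod.ext (funext fun l => ?_) (by simp [wrMul])
    simp only [wrMul, Pi.mul_apply, inv_one, one_mul, ξ]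
    rw [hT.apply_eq l, hT'.apply_eq l]
    group

lemma apply_zpow_mul_of_eventually_zProd_eq (hb : orderOf b = 0) (hf : (mulSupport f).Finite)
    {π : L → G} (hπ : ∀ t, ∀ᶠ N in atTop, zProd f b t N = π t) (k : ℤ) (t : L) :
    π (b ^ k * t) = π t := by
  obtain ⟨T, hT⟩ := exists_hasTailProd hb hf
  have hmul : ∀ t, π (b * t) = π t := fun t => by
    have hshift := (tendsto_add_atTop_nat 1).eventually
      ((hT.eventually_eq_zProd hb hf t).and (hπ t))
    obtain ⟨N, ⟨hbt, hπbt⟩, ht, hπt⟩ :=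
      (((hT.eventually_eq_zProd hb hf (b * t)).and (hπ (b * t))).and hshift).exists
    have hpow : b ^ (N : ℤ) * (b * t) = b ^ ((N + 1 : ℕ) : ℤ) * t := by push_cast; group
    rw [← hπbt, ← hbt, hpow, ht, hπt]
  induction k using Int.induction_on with
  | zero => rw [zpow_zero, one_mul]
  | succ k ih => rw [add_comm, zpow_add, zpow_one, mul_assoc, hmul, ih]
  | pred k ih => rw [← ih, ← hmul, ← mul_assoc, ← zpow_one_add, add_sub_cancel]

lemma exists_zpowers_transversal (b : L) :
    ∃ r : L → L, (∀ l, ∃ k : ℤ, r l = b ^ k * l) ∧ ∀ (k : ℤ) l, r (b ^ k * l) = r l := by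
  let s := QuotientGroup.rightRel (Subgroup.zpowers b)
  refine ⟨fun l => (Quotient.mk s l).out, fun l => ?_, fun k l => ?_⟩
  · obtain ⟨k, hk⟩ := Subgroup.mem_zpowers_iff.1
      (QuotientGroup.rightRel_apply.1 (Quotient.mk_out (s := s) l))
    exact ⟨-k, by rw [zpow_neg, hk]; group⟩
  · refine congrArg Quotient.out (Quotient.sound (QuotientGroup.rightRel_apply.2 ?_))
    exact Subgroup.mem_zpowers_iff.2 ⟨-k, by group⟩

end

def onTransversal {G L : Type*} [One G] [DecidableEq L] (r : L → L) (c : L → G) (l : L) : G :=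
  if r l = l then c l else 1

lemma onTransversal_ne_one {G L : Type*} [One G] [DecidableEq L] {r : L → L} {c : L → G}
    {l : L} (h : onTransversal r c l ≠ 1) : r l = l ∧ onTransversal r c l = c l := by
  by_cases hl : r l = l <;> simp_all [onTransversal]

section

variable {G L : Type*} [Group G] [Group L] {f : L → G} {b : L}

lemma eventually_zProd_onTransversal [DecidableEq L] (hb : orderOf b = 0) {r : L → L}
    (hr : ∀ l, ∃ k : ℤ, r l = b ^ k * l) (hr_zpow : ∀ (k : ℤ) l, r (b ^ k * l) = r l)
    (c : L → G) (s : L) : ∀ᶠ N in atTop, zProd (onTransversal r c) b s N = c (r s) := by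
  obtain ⟨k₀, hk₀⟩ := hr s
  have hrr : r (r s) = r s := by rw [hk₀, hr_zpow, hk₀]
  filter_upwards [eventually_ge_atTop k₀.natAbs] with N hN
  rw [zProd_eq_tailProd, tailProd_eq_apply (m := (N - k₀).toNat) _ (by omega)]
  · have hm : b ^ (-((N - k₀).toNat : ℤ)) * (b ^ (N : ℤ) * s) = r s := by
      rw [hk₀, ← mul_assoc, ← zpow_add]
      congr 2
      omega
    rw [hm, onTransversal, if_pos hrr]
  · intro i hi
    rw [← mul_assoc, ← zpow_add, onTransversal, hr_zpow, hk₀, if_neg fun h => hi ?_]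
    have := zpow_mul_left_injective hb s h
    omega

lemma mulSupport_onTransversal_finite [DecidableEq L] (hf : (mulSupport f).Finite) {π : L → G}
    (hπ : ∀ t, ∀ᶠ N in atTop, zProd f b t N = π t) {r : L → L}
    (hr_zpow : ∀ (k : ℤ) l, r (b ^ k * l) = r l) : (mulSupport (onTransversal r π)).Finite := by
  refine (hf.image r).subset fun l hl => ?_
  obtain ⟨hrl, hπl⟩ := onTransversal_ne_one hl
  obtain ⟨k, hk⟩ : ∃ k : ℤ, f (b ^ k * l) ≠ 1 := by
    by_contra! h
    obtain ⟨N, hN⟩ := (hπ l).exists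
    exact hl (by rw [hπl, ← hN, zProd_eq_one h])
  exact ⟨_, hk, by rw [hr_zpow, hrl]⟩

end

/-- let `(η,b) ∈ G ≀ L` with `b` of infinite order, and let `π t` denote
the (eventually constant) coset product `Π_{k∈ℤ} η(b^{-k} t)`. Then `(η,b)` is conjugate
in `G ≀ L` to some `(η',b)` whose support meets each right coset `⟨b⟩t` with `π t ≠ 1`
in exactly one point, at which `η'` takes the value `π t`, and which avoids all cosets
with `π t = 1`. -/
theorem stmt8 {G L : Type*} [Group G] [Group L] (η : L → G) (b : L)
    (hb : orderOf b = 0) (hη : (Function.mulSupport η).Finite) (π : L → G)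
    (hπ : ∀ t : L, ∃ N₀ : ℕ, ∀ N ≥ N₀, zProd η b t N = π t) :
    ∃ η' : L → G, (Function.mulSupport η').Finite ∧
      (∃ x : (L → G) × L, (Function.mulSupport x.1).Finite ∧
        wrMul x (η, b) = wrMul (η', b) x) ∧
      (∀ t : L, π t = 1 → ∀ k : ℤ, η' (b ^ k * t) = 1) ∧
      (∀ t : L, π t ≠ 1 → ∃! l : L, (∃ k : ℤ, l = b ^ k * t) ∧ η' l ≠ 1) ∧
      (∀ t l : L, (∃ k : ℤ, l = b ^ k * t) → η' l ≠ 1 → η' l = π t) := by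
  classical
  have hπ' : ∀ t, ∀ᶠ N in atTop, zProd η b t N = π t := fun t => eventually_atTop.2 (hπ t)
  have hπ_zpow := apply_zpow_mul_of_eventually_zProd_eq hb hη hπ'
  obtain ⟨r, hr, hr_zpow⟩ := exists_zpowers_transversal b
  have hfin := mulSupport_onTransversal_finite hη hπ' hr_zpow
  refine ⟨onTransversal r π, hfin, exists_conj_of_eventually_zProd_eq hb hη hfin fun s => ?_,
    ?_, ?_, ?_⟩
  · obtain ⟨k, hk⟩ := hr s
    filter_upwards [hπ' s, eventually_zProd_onTransversal hb hr hr_zpow π s] with N h h'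
    rw [h, h', hk, hπ_zpow]
  · intro t ht k
    by_contra h
    exact h (by rw [(onTransversal_ne_one h).2, hπ_zpow, ht])
  · intro t ht
    obtain ⟨k, hk⟩ := hr t
    have hrr : r (r t) = r t := by rw [hk, hr_zpow, hk]
    refine ⟨r t, ⟨⟨k, hk⟩, ?_⟩, ?_⟩
    · rwa [onTransversal, if_pos hrr, hk, hπ_zpow]
    · rintro l ⟨⟨j, rfl⟩, hl⟩
      rw [← (onTransversal_ne_one hl).1, hr_zpow]
  · rintro t l ⟨k, rfl⟩ hl
    rw [(onTransversal_ne_one hl).2, hπ_zpow]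
end

section
/- Let D ≥ 1 and let F(x,y) be the two-variable formal power series counting finite subtrees T of the D-regular tree that contain a fixed vertex e' and at most one fixed neighbor v of e', graded by x^{(number of non-leaves of T)} y^{(number of leaves of T other than e')}. Then F satisfies the functional equation F(x,y) = 1 + y − x + x·F(x,y)^{D−1}. In particular, F(x,y) = 1+y when D = 1, and F(x,y) = 1 + y/(1−x) when D = 2. -/
/-!
A subtree is encoded by the prefix-closed set of words below `v`. Such a set is either empty
(the tree `{e'}`, contributing `1`), or it is obtained by grafting a `(D-1)`-tuple of such sets
below `v`. If all of them are empty, `v` is a leaf (contributing `y`); otherwise `v` is a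
non-leaf and the weights of the parts add up, contributing `x (F^(D-1) - 1)`. Hence
`F = 1 + y + x (F^(D-1) - 1)`, and the cases `D = 1, 2` are linear in `F`.
-/

open MvPowerSeries

/-- A finite subtree of the `D`-regular tree containing the distinguished vertex `e'`
and whose only possible neighbor of `e'` is the distinguished neighbor `v` is encoded by
a prefix-closed finite set `S` of paths descending from `v` (each vertex other than the
parent direction has `D-1` children); `S = ∅` encodes the singleton tree `{e'}`.
`treeCount D i j` is the number of such subtrees with `i` non-leaves and `j` leaves
other than `e'` (a leaf is a vertex of degree ≤ 1 in the subtree; `e'` is never a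
non-leaf, and a vertex of `S` is a non-leaf exactly when it has a child in `S`). -/
noncomputable def treeCount (D i j : ℕ) : ℕ :=
  Nat.card {S : Finset (List (Fin (D - 1))) //
    (∀ p ∈ S, ∀ q : List (Fin (D - 1)), q <+: p → q ∈ S) ∧
    Nat.card {p : List (Fin (D - 1)) // p ∈ S ∧ ∃ c, p ++ [c] ∈ S} = i ∧
    Nat.card {p : List (Fin (D - 1)) // p ∈ S ∧ ¬ ∃ c, p ++ [c] ∈ S} = j}

/-- The two-variable generating series `F(x,y) = Σ_{i,j} a_{ij} x^i y^j` of the subtrees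
above, with `x = X 0` recording non-leaves and `y = X 1` recording leaves other than `e'`. -/
noncomputable def treeSeries (D : ℕ) : MvPowerSeries (Fin 2) ℤ :=
  fun s => (treeCount D (s 0) (s 1) : ℤ)

open Finset.HasAntidiagonal

noncomputable section

section GeneratingSeries

variable {σ α β ι : Type*}

/- The coefficients are `Nat.card`s, hence `0` on infinite fibres: this is why the lemmas that
add or multiply coefficients assume finite fibres. -/
def genSeries (w : α → σ →₀ ℕ) : MvPowerSeries σ ℤ :=
  fun s => Nat.card {a // w a = s}

lemma coeff_genSeries (w : α → σ →₀ ℕ) (s : σ →₀ ℕ) :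
    coeff s (genSeries w) = Nat.card {a // w a = s} :=
  rfl

lemma genSeries_comp_equiv (e : α ≃ β) (w : β → σ →₀ ℕ) : genSeries (w ∘ e) = genSeries w := by
  ext s
  exact congrArg Nat.cast (Nat.card_congr (e.subtypeEquiv fun _ => Iff.rfl))

lemma genSeries_of_forall_eq (a₀ : α) (h : ∀ a, a = a₀) (w : α → σ →₀ ℕ) :
    genSeries w = monomial (w a₀) 1 := by
  classical
  ext s
  rw [coeff_genSeries, coeff_monomial]
  split_ifs with hs
  · have : Unique {a // w a = s} := ⟨⟨⟨a₀, hs.symm⟩⟩, fun a => Subtype.ext (h a)⟩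
    simp
  · have : IsEmpty {a // w a = s} := ⟨fun a => hs (by rw [← a.2, h a])⟩
    simp

lemma genSeries_eq_add_compl {w : α → σ →₀ ℕ} (hw : ∀ s, (w ⁻¹' {s}).Finite) (p : α → Prop) :
    genSeries w
      = genSeries (fun a : {a // p a} => w a) + genSeries (fun a : {a // ¬ p a} => w a) := by
  classical
  ext s
  have : Finite {a // w a = s} := (hw s).to_subtype
  have e (q : α → Prop) : {x : {a // w a = s} // q x} ≃ {x : {a // q a} // w x = s} :=
    (Equiv.subtypeSubtypeEquivSubtypeInter _ q).trans
      ((Equiv.subtypeEquivRight fun _ => and_comm).trans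
        (Equiv.subtypeSubtypeEquivSubtypeInter q _).symm)
  rw [map_add, coeff_genSeries, coeff_genSeries, coeff_genSeries, ← Nat.card_congr (e p),
    ← Nat.card_congr (e _), ← Nat.cast_add, ← Nat.card_sum,
    Nat.card_congr (Equiv.sumCompl fun x : {a // w a = s} => p x)]

lemma genSeries_const_add (s₀ : σ →₀ ℕ) (w : α → σ →₀ ℕ) :
    genSeries (fun a => s₀ + w a) = monomial s₀ 1 * genSeries w := by
  ext s
  rw [coeff_monomial_mul, coeff_genSeries, coeff_genSeries]
  split_ifs with hs
  · rw [one_mul]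
    exact congrArg Nat.cast (Nat.card_congr (Equiv.subtypeEquivRight fun a => by
      rw [eq_tsub_iff_add_eq_of_le hs, add_comm]))
  · have : IsEmpty {a // s₀ + w a = s} := ⟨fun a => hs (a.2 ▸ le_self_add)⟩
    simp

def fiberProdEquiv [DecidableEq σ] (w₁ : α → σ →₀ ℕ) (w₂ : β → σ →₀ ℕ) (s : σ →₀ ℕ) :
    {p : α × β // w₁ p.1 + w₂ p.2 = s} ≃
      Σ t : antidiagonal s, {a // w₁ a = t.1.1} × {b // w₂ b = t.1.2} where
  toFun p := ⟨⟨(w₁ p.1.1, w₂ p.1.2), mem_antidiagonal.2 p.2⟩, ⟨p.1.1, rfl⟩, ⟨p.1.2, rfl⟩⟩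
  invFun x := ⟨(x.2.1, x.2.2), by rw [x.2.1.2, x.2.2.2]; exact mem_antidiagonal.1 x.1.2⟩
  left_inv _ := rfl
  right_inv := by
    rintro ⟨⟨⟨u, v⟩, h⟩, ⟨a, ha : w₁ a = u⟩, ⟨b, hb : w₂ b = v⟩⟩
    subst ha hb
    rfl

lemma genSeries_prod {w₁ : α → σ →₀ ℕ} {w₂ : β → σ →₀ ℕ} (hw₁ : ∀ s, (w₁ ⁻¹' {s}).Finite)
    (hw₂ : ∀ s, (w₂ ⁻¹' {s}).Finite) :
    genSeries (fun p : α × β => w₁ p.1 + w₂ p.2) = genSeries w₁ * genSeries w₂ := by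
  classical
  ext s
  have (t : σ →₀ ℕ) : Finite {a // w₁ a = t} := (hw₁ t).to_subtype
  have (t : σ →₀ ℕ) : Finite {b // w₂ b = t} := (hw₂ t).to_subtype
  rw [coeff_mul, coeff_genSeries, Nat.card_congr (fiberProdEquiv w₁ w₂ s), Nat.card_sigma,
    ← Finset.sum_coe_sort (antidiagonal s)]
  simp [Nat.card_prod, coeff_genSeries]

lemma finite_sum_fiber [Fintype ι] {w : α → σ →₀ ℕ} (hw : ∀ s, (w ⁻¹' {s}).Finite)
    (s : σ →₀ ℕ) : ((fun T : ι → α => ∑ i, w (T i)) ⁻¹' {s}).Finite := by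
  classical
  have hle : {a | w a ≤ s}.Finite := by
    have : {a | w a ≤ s} = ⋃ t ∈ Finset.Iic s, w ⁻¹' {t} := by ext; simp
    exact this ▸ (Finset.Iic s).finite_toSet.biUnion fun t _ => hw t
  refine (Set.Finite.pi fun _ => hle).subset fun T hT i _ => ?_
  rw [Set.mem_preimage, Set.mem_singleton_iff] at hT
  exact hT ▸ Finset.single_le_sum (f := fun i => w (T i)) (fun _ _ => zero_le) (Finset.mem_univ i)

lemma genSeries_sum_fin {w : α → σ →₀ ℕ} (hw : ∀ s, (w ⁻¹' {s}).Finite) :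
    ∀ m : ℕ, genSeries (fun T : Fin m → α => ∑ i, w (T i)) = genSeries w ^ m
  | 0 => by
    rw [genSeries_of_forall_eq (Fin.elim0 ·) (fun _ => funext (·.elim0)), pow_zero]
    simp
  | m + 1 => by
    rw [pow_succ', ← genSeries_sum_fin hw m, ← genSeries_prod hw (finite_sum_fiber hw),
      ← genSeries_comp_equiv (Fin.consEquiv fun _ => α).symm]
    congr 1
    funext T
    simp [Fin.sum_univ_succ, Fin.consEquiv, Fin.tail]

lemma genSeries_sum_pi [Fintype ι] {w : α → σ →₀ ℕ} (hw : ∀ s, (w ⁻¹' {s}).Finite) :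
    genSeries (fun T : ι → α => ∑ i, w (T i)) = genSeries w ^ Fintype.card ι := by
  rw [← genSeries_sum_fin hw,
    ← genSeries_comp_equiv ((Fintype.equivFin ι).arrowCongr (Equiv.refl α)).symm]
  congr 1
  funext T
  exact (Fintype.equivFin ι).sum_comp (w ∘ T)

end GeneratingSeries

section PrefixTree

variable {α : Type*}

def IsPrefixClosed (S : Finset (List α)) : Prop :=
  ∀ p ∈ S, ∀ q, q <+: p → q ∈ S

abbrev PrefixTree (α : Type*) := {S : Finset (List α) // IsPrefixClosed S}

lemma isPrefixClosed_empty : IsPrefixClosed (∅ : Finset (List α)) := by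
  simp [IsPrefixClosed]

lemma IsPrefixClosed.nil_mem_iff {S : Finset (List α)} (hS : IsPrefixClosed S) :
    [] ∈ S ↔ S ≠ ∅ := by
  refine ⟨Finset.ne_empty_of_mem, fun hne => ?_⟩
  obtain ⟨p, hp⟩ := Finset.nonempty_iff_ne_empty.2 hne
  exact hS p hp [] List.nil_prefix

lemma IsPrefixClosed.length_lt_card {S : Finset (List α)} (hS : IsPrefixClosed S) {p : List α}
    (hp : p ∈ S) : p.length < S.card := by
  have : Finset.range (p.length + 1) ⊆ S.image List.length := fun k hk =>
    Finset.mem_image.2 ⟨p.take k, hS p hp _ (List.take_prefix k p),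
      List.length_take_of_le (Nat.lt_succ_iff.1 (Finset.mem_range.1 hk))⟩
  simpa using (Finset.card_le_card this).trans Finset.card_image_le

def subtreeAt (S : Finset (List α)) (c : α) : Finset (List α) :=
  S.preimage (List.cons c) List.cons_injective.injOn

@[simp] lemma mem_subtreeAt {S : Finset (List α)} {c : α} {q : List α} :
    q ∈ subtreeAt S c ↔ c :: q ∈ S :=
  Finset.mem_preimage

lemma IsPrefixClosed.subtreeAt {S : Finset (List α)} (hS : IsPrefixClosed S) (c : α) :
    IsPrefixClosed (subtreeAt S c) := fun p hp q hq => by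
  simp only [mem_subtreeAt] at hp ⊢
  exact hS _ hp _ (List.cons_prefix_cons.2 ⟨rfl, hq⟩)

variable [Fintype α] [DecidableEq α]

def graft (T : α → Finset (List α)) : Finset (List α) :=
  insert [] (Finset.univ.biUnion fun c => (T c).map ⟨List.cons c, List.cons_injective⟩)

variable {T : α → Finset (List α)}

@[simp] lemma nil_mem_graft : [] ∈ graft T :=
  Finset.mem_insert_self _ _

@[simp] lemma cons_mem_graft {c : α} {q : List α} : c :: q ∈ graft T ↔ q ∈ T c := by
  simp [graft]

lemma graft_ne_empty : graft T ≠ ∅ :=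
  Finset.ne_empty_of_mem nil_mem_graft

lemma isPrefixClosed_graft (hT : ∀ c, IsPrefixClosed (T c)) : IsPrefixClosed (graft T) := by
  rintro (_ | ⟨c, p⟩) hp (_ | ⟨c', q⟩) hq
  · exact nil_mem_graft
  · exact absurd hq (by simp)
  · exact nil_mem_graft
  · rw [List.cons_prefix_cons] at hq
    obtain ⟨rfl, hq⟩ := hq
    exact cons_mem_graft.2 (hT _ p (cons_mem_graft.1 hp) q hq)

lemma subtreeAt_graft : subtreeAt (graft T) = T := by
  ext c q
  simp

lemma graft_subtreeAt {S : Finset (List α)} (hS : IsPrefixClosed S) (hne : S ≠ ∅) :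
    graft (subtreeAt S) = S := by
  ext (_ | ⟨c, q⟩)
  · simpa using (hS.nil_mem_iff.2 hne)
  · simp

def graftEquiv : (α → PrefixTree α) ≃ {S : PrefixTree α // ¬ S.1 = ∅} where
  toFun T := ⟨⟨graft fun c => T c, isPrefixClosed_graft fun c => (T c).2⟩, graft_ne_empty⟩
  invFun S c := ⟨subtreeAt S.1.1 c, S.1.2.subtreeAt c⟩
  left_inv _ := funext fun c => Subtype.ext (congrFun subtreeAt_graft c)
  right_inv S := Subtype.ext (Subtype.ext (graft_subtreeAt S.1.2 S.2))

lemma card_filter_graft (Q : List α → Prop) [DecidablePred Q] :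
    ((graft T).filter Q).card
      = (if Q [] then 1 else 0) + ∑ c, ((T c).filter fun q => Q (c :: q)).card := by
  have hdisj : ((Finset.univ : Finset α) : Set α).PairwiseDisjoint
      fun c => ((T c).map ⟨List.cons c, List.cons_injective⟩).filter Q := by
    intro c _ c' _ hcc
    simp [Function.onFun, Finset.disjoint_left, hcc.symm]
  have hcard : ((Finset.univ.biUnion fun c =>
      (T c).map ⟨List.cons c, List.cons_injective⟩).filter Q).card
        = ∑ c, ((T c).filter fun q => Q (c :: q)).card := by
    rw [Finset.filter_biUnion, Finset.card_biUnion hdisj]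
    simp [Finset.filter_map]
  rw [graft, Finset.filter_insert]
  split_ifs
  · rw [Finset.card_insert_of_notMem (by simp), hcard, add_comm]
  · rw [hcard, zero_add]

def innerVertices (S : Finset (List α)) : Finset (List α) :=
  S.filter fun p => ∃ c, p ++ [c] ∈ S

def leafVertices (S : Finset (List α)) : Finset (List α) :=
  S.filter fun p => ¬ ∃ c, p ++ [c] ∈ S

def treeWeight (S : Finset (List α)) : Fin 2 →₀ ℕ :=
  Finsupp.single 0 (innerVertices S).card + Finsupp.single 1 (leafVertices S).card

lemma treeWeight_eq_iff {S : Finset (List α)} {s : Fin 2 →₀ ℕ} :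
    treeWeight S = s ↔ (innerVertices S).card = s 0 ∧ (leafVertices S).card = s 1 := by
  simp [treeWeight, Finsupp.ext_iff, Fin.forall_fin_two]

lemma treeWeight_apply_zero_add_apply_one (S : Finset (List α)) :
    treeWeight S 0 + treeWeight S 1 = S.card := by
  have h := Finset.card_filter_add_card_filter_not (s := S) fun p => ∃ c, p ++ [c] ∈ S
  simpa [treeWeight, innerVertices, leafVertices] using h

lemma treeWeight_graft (hT : ∀ c, IsPrefixClosed (T c)) :
    treeWeight (graft T) = if ∀ c, T c = ∅ then Finsupp.single 1 1
      else Finsupp.single 0 1 + ∑ c, treeWeight (T c) := by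
  have hroot : (∃ c, [] ++ [c] ∈ graft T) ↔ ¬ ∀ c, T c = ∅ := by
    simp [(hT _).nil_mem_iff]
  simp only [treeWeight, innerVertices, leafVertices, card_filter_graft, List.cons_append,
    cons_mem_graft, hroot]
  split_ifs with h
  · simp [h]
  · simp [Finset.sum_add_distrib, Finsupp.single_finsetSum]
    abel

lemma finite_treeWeight_fiber (s : Fin 2 →₀ ℕ) :
    ((fun S : PrefixTree α => treeWeight S.1) ⁻¹' {s}).Finite := by
  have hU := List.finite_length_lt α (s 0 + s 1)
  refine (hU.toFinset.powerset.finite_toSet.preimage Subtype.val_injective.injOn).subset ?_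
  rintro ⟨S, hS⟩ hw
  have hcard : S.card = s 0 + s 1 := by
    rw [← treeWeight_apply_zero_add_apply_one, show treeWeight S = s from hw]
  simp only [Set.mem_preimage, Finset.mem_coe, Finset.mem_powerset]
  intro p hp
  simpa [hcard] using hS.length_lt_card hp

end PrefixTree

section TreeSeries

variable {α : Type*} [Fintype α] [DecidableEq α]

lemma genSeries_treeWeight :
    genSeries (fun S : PrefixTree α => treeWeight S.1)
      = 1 + X 1 - X 0
        + X 0 * genSeries (fun S : PrefixTree α => treeWeight S.1) ^ Fintype.card α := by
  set w := fun S : PrefixTree α => treeWeight S.1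
  have hw : ∀ s, (w ⁻¹' {s}).Finite := finite_treeWeight_fiber
  let empty : PrefixTree α := ⟨∅, isPrefixClosed_empty⟩
  have hempty : w empty = 0 := by simp [w, empty, treeWeight, innerVertices, leafVertices]
  have hleaf : ∀ T : {T : α → PrefixTree α // ∀ c, (T c).1 = ∅},
      T = ⟨fun _ => empty, fun _ => rfl⟩ :=
    fun T => Subtype.ext (funext fun c => Subtype.ext (T.2 c))
  set G := genSeries fun T : {T : α → PrefixTree α // ¬ ∀ c, (T c).1 = ∅} => ∑ c, w (T.1 c)
  have hpow : genSeries w ^ Fintype.card α = 1 + G := by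
    rw [← genSeries_sum_pi hw,
      genSeries_eq_add_compl (finite_sum_fiber hw) (fun T => ∀ c, (T c).1 = ∅),
      genSeries_of_forall_eq _ hleaf]
    simp only [hempty, Finset.sum_const_zero, monomial_zero_one]
    rfl
  have hgraft : genSeries (fun T : α → PrefixTree α => treeWeight (graft fun c => (T c).1))
      = X 1 + X 0 * G := by
    have hfin (s : Fin 2 →₀ ℕ) :
        ((fun T : α → PrefixTree α => treeWeight (graft fun c => (T c).1)) ⁻¹' {s}).Finite :=
      Set.Finite.preimage (f := Subtype.val ∘ graftEquiv)
        (Subtype.val_injective.comp graftEquiv.injective).injOn (hw s)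
    have hinner : (fun T : {T : α → PrefixTree α // ¬ ∀ c, (T c).1 = ∅} =>
        treeWeight (graft fun c => (T.1 c).1)) = fun T => Finsupp.single 0 1 + ∑ c, w (T.1 c) :=
      funext fun T => by rw [treeWeight_graft (fun c => (T.1 c).2), if_neg T.2]
    rw [genSeries_eq_add_compl hfin (fun T => ∀ c, (T c).1 = ∅),
      genSeries_of_forall_eq _ hleaf, treeWeight_graft fun _ => isPrefixClosed_empty,
      if_pos fun _ => rfl, hinner, genSeries_const_add]
    rfl
  have hA : genSeries w
      = 1 + genSeries (fun T : α → PrefixTree α => treeWeight (graft fun c => (T c).1)) := by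
    rw [genSeries_eq_add_compl hw (fun S => S.1 = ∅),
      genSeries_of_forall_eq (⟨empty, rfl⟩ : {S : PrefixTree α // S.1 = ∅})
        fun S => Subtype.ext (Subtype.ext S.2),
      ← genSeries_comp_equiv graftEquiv, hempty, monomial_zero_one]
    rfl
  rw [hpow, hA, hgraft]
  ring

end TreeSeries

end

lemma treeSeries_eq_genSeries (D : ℕ) :
    treeSeries D = genSeries (fun S : PrefixTree (Fin (D - 1)) => treeWeight S.1) := by
  have hcard (S : Finset (List (Fin (D - 1)))) (Q : List (Fin (D - 1)) → Prop)
      [DecidablePred Q] : Nat.card {p // p ∈ S ∧ Q p} = (S.filter Q).card := by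
    rw [← Nat.card_eq_finsetCard]
    exact Nat.card_congr (Equiv.subtypeEquivRight fun _ => Finset.mem_filter.symm)
  ext s
  refine congrArg Nat.cast (Nat.card_congr ((Equiv.subtypeEquivRight fun S => ?_).trans
    (Equiv.subtypeSubtypeEquivSubtypeInter IsPrefixClosed (treeWeight · = s)).symm))
  rw [treeWeight_eq_iff, innerVertices, leafVertices, ← hcard, ← hcard]
  rfl

theorem stmt10_general (D : ℕ) :
    (treeSeries D
      = 1 + MvPowerSeries.X 1 - MvPowerSeries.X 0
        + MvPowerSeries.X 0 * (treeSeries D) ^ (D - 1)) ∧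
    (D = 1 → treeSeries D = 1 + MvPowerSeries.X 1) ∧
    (D = 2 → treeSeries D * (1 - MvPowerSeries.X 0)
      = 1 + MvPowerSeries.X 1 - MvPowerSeries.X 0) := by
  have h := genSeries_treeWeight (α := Fin (D - 1))
  rw [← treeSeries_eq_genSeries, Fintype.card_fin] at h
  refine ⟨h, ?_, ?_⟩ <;> rintro rfl <;> norm_num at h <;> linear_combination h

/-- the series `F` satisfies `F = 1 + y - x + x·F^{D-1}`; in particular
`F = 1 + y` when `D = 1`, and `F = 1 + y/(1-x)` (i.e. `F·(1-x) = 1 + y - x`) when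
`D = 2`. -/
theorem stmt10 (D : ℕ) (hD : 1 ≤ D) :
    (treeSeries D
      = 1 + MvPowerSeries.X 1 - MvPowerSeries.X 0
        + MvPowerSeries.X 0 * (treeSeries D) ^ (D - 1)) ∧
    (D = 1 → treeSeries D = 1 + MvPowerSeries.X 1) ∧
    (D = 2 → treeSeries D * (1 - MvPowerSeries.X 0)
      = 1 + MvPowerSeries.X 1 - MvPowerSeries.X 0) :=
  stmt10_general D
end

section
/- The power series f(z) = Σ_{m≥1} a_m z^m where a_m ∼ (2/m)·((1+√5)/2)^m (asymptotic equivalence of coefficients), with a_m ∈ ℕ, is transcendental over ℚ(z); i.e., a power series with natural number coefficients asymptotic to c·ρ^m/m with ρ = (1+√5)/2 and c = 2 cannot be algebraic over the field of rational functions ℚ(z). -/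
/-!
The series `F(x) = ∑ aₘ xᵐ` has radius of convergence `x₀ = 1/ρ`. Since `aₘ ≍ ρᵐ/m`, the terms
`aₘ x₀ᵐ` behave like the harmonic series, so `F(x) → ∞` as `x → x₀⁻`, but only logarithmically:
`F(x) = O(log (1 - ρx))`, hence `(x - x₀) F(x)ʲ → 0` for every `j`. An algebraic relation
`∑ Pᵢ(x) F(x)ⁱ = 0`, evaluated on `(0, x₀)`, is impossible for such `F`: after cancelling the
largest common power of `(x - x₀)` from the `Pᵢ`, divide by `F(x)ᵏ`, where `k` is the largest
index with `Pₖ(x₀) ≠ 0`, and let `x → x₀⁻`; every term tends to `0` except the `k`-th, which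
tends to `Pₖ(x₀) ≠ 0`.
-/

open Filter Finset Polynomial Topology Asymptotics

namespace PowerSeries

variable {R : Type*} [NormedCommRing R]

def SummableNormAt (f : R⟦X⟧) (x : R) : Prop :=
  Summable fun m => ‖coeff m f * x ^ m‖

noncomputable def tsumEval (f : R⟦X⟧) (x : R) : R :=
  ∑' m, coeff m f * x ^ m

theorem coeff_mul_mul_pow (f g : R⟦X⟧) (x : R) (m : ℕ) :
    coeff m (f * g) * x ^ m =
      ∑ kl ∈ antidiagonal m, coeff kl.1 f * x ^ kl.1 * (coeff kl.2 g * x ^ kl.2) := by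
  rw [coeff_mul, sum_mul]
  refine sum_congr rfl fun kl hkl => ?_
  rw [← mem_antidiagonal.mp hkl, pow_add]
  ring

theorem summableNormAt_coe (p : R[X]) (x : R) : (p : R⟦X⟧).SummableNormAt x :=
  summable_of_ne_finset_zero (s := range (p.natDegree + 1)) fun m hm => by
    rw [Polynomial.coeff_coe, coeff_eq_zero_of_natDegree_lt (by simpa using hm), zero_mul,
      norm_zero]

theorem tsumEval_coe (p : R[X]) (x : R) : (p : R⟦X⟧).tsumEval x = p.eval x := by
  rw [tsumEval, eval_eq_sum_range, tsum_eq_sum (s := range (p.natDegree + 1))]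
  · simp only [Polynomial.coeff_coe]
  · intro m hm
    rw [Polynomial.coeff_coe, coeff_eq_zero_of_natDegree_lt (by simpa using hm), zero_mul]

variable {f g : R⟦X⟧} {x : R}

theorem SummableNormAt.mul (hf : f.SummableNormAt x) (hg : g.SummableNormAt x) :
    (f * g).SummableNormAt x := by
  simpa only [SummableNormAt, coeff_mul_mul_pow] using
    summable_norm_sum_mul_antidiagonal_of_summable_norm hf hg

theorem SummableNormAt.pow (hf : f.SummableNormAt x) (i : ℕ) : (f ^ i).SummableNormAt x := by
  induction i with
  | zero => simpa using summableNormAt_coe (1 : R[X]) x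
  | succ i ih => simpa only [pow_succ] using ih.mul hf

variable [CompleteSpace R]

theorem tsumEval_mul (hf : f.SummableNormAt x) (hg : g.SummableNormAt x) :
    (f * g).tsumEval x = f.tsumEval x * g.tsumEval x := by
  simp only [tsumEval, coeff_mul_mul_pow,
    tsum_mul_tsum_eq_tsum_sum_antidiagonal_of_summable_norm hf hg]

theorem tsumEval_pow (hf : f.SummableNormAt x) (i : ℕ) :
    (f ^ i).tsumEval x = f.tsumEval x ^ i := by
  induction i with
  | zero => simpa using tsumEval_coe (1 : R[X]) x
  | succ i ih => rw [pow_succ, tsumEval_mul (hf.pow i) hf, ih, pow_succ]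

theorem tsumEval_sum {ι : Type*} (s : Finset ι) {f : ι → R⟦X⟧}
    (hf : ∀ i ∈ s, (f i).SummableNormAt x) :
    (∑ i ∈ s, f i).tsumEval x = ∑ i ∈ s, (f i).tsumEval x := by
  simp only [tsumEval, map_sum, sum_mul]
  exact Summable.tsum_finsetSum fun i hi => (hf i hi).of_norm

theorem tsumEval_sum_coe_mul_pow (s : Finset ℕ) (P : ℕ → R[X]) (hg : g.SummableNormAt x) :
    (∑ i ∈ s, (P i : R⟦X⟧) * g ^ i).tsumEval x = ∑ i ∈ s, (P i).eval x * g.tsumEval x ^ i := by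
  rw [tsumEval_sum s fun i _ => (summableNormAt_coe _ x).mul (hg.pow _)]
  simp only [tsumEval_mul (summableNormAt_coe _ x) (hg.pow _), tsumEval_coe, tsumEval_pow hg]

end PowerSeries

theorem Polynomial.exists_eq_X_sub_C_pow_mul_not_isRoot {R ι : Type*} [CommRing R]
    {s : Finset ι} {P : ι → R[X]} (hP : ∃ i ∈ s, P i ≠ 0) (a : R) :
    ∃ (k : ℕ) (Q : ι → R[X]), (∀ i ∈ s, P i = (X - C a) ^ k * Q i) ∧
      ∃ i ∈ s, ¬ (Q i).IsRoot a := by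
  classical
  have hne : (s.filter (P · ≠ 0)).Nonempty := by simpa [Finset.Nonempty] using hP
  obtain ⟨i₀, hi₀, hk⟩ := exists_mem_eq_inf' hne fun i => (P i).rootMultiplicity a
  set k := (s.filter (P · ≠ 0)).inf' hne fun i => (P i).rootMultiplicity a
  rw [mem_filter] at hi₀
  refine ⟨k, fun i => P i /ₘ (X - C a) ^ k, fun i hi => ?_, i₀, hi₀.1, ?_⟩
  · obtain ⟨q, hq⟩ : (X - C a) ^ k ∣ P i := by
      by_cases hPi : P i = 0
      · simp [hPi]
      · exact (pow_dvd_pow _ (inf'_le _ (mem_filter.mpr ⟨hi, hPi⟩))).trans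
          (pow_rootMultiplicity_dvd _ a)
    dsimp only
    rw [hq, mul_divByMonic_cancel_left _ ((monic_X_sub_C a).pow k)]
  · simpa only [hk, IsRoot.def] using eval_divByMonic_pow_rootMultiplicity_ne_zero a hi₀.2

section BlowUp

variable {l : Filter ℝ} {F : ℝ → ℝ} {x₀ : ℝ}

theorem tendsto_eval_mul_pow_div_pow_of_lt (hl : l ≤ 𝓝 x₀) (hF : Tendsto F l atTop)
    (P : ℝ[X]) {i k : ℕ} (hik : i < k) :
    Tendsto (fun x => P.eval x * F x ^ i / F x ^ k) l (𝓝 0) := by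
  obtain ⟨d, rfl⟩ := Nat.exists_eq_add_of_lt hik
  have hP : Tendsto (fun x => P.eval x) l (𝓝 (P.eval x₀)) :=
    (P.continuous.tendsto x₀).mono_left hl
  have hinv : Tendsto (fun x => (F x ^ (d + 1))⁻¹) l (𝓝 0) :=
    tendsto_inv_atTop_zero.comp ((tendsto_pow_atTop d.succ_ne_zero).comp hF)
  refine (mul_zero (P.eval x₀) ▸ hP.mul hinv).congr' ?_
  filter_upwards [hF.eventually_ne_atTop 0] with x hx
  field_simp
  ring

theorem tendsto_eval_mul_pow_div_pow_of_isRoot (hl : l ≤ 𝓝 x₀) (hF : ∀ᶠ x in l, F x ≠ 0)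
    (hF₀ : ∀ j : ℕ, Tendsto (fun x => (x - x₀) * F x ^ j) l (𝓝 0))
    {P : ℝ[X]} (hP : P.IsRoot x₀) {i k : ℕ} (hki : k ≤ i) :
    Tendsto (fun x => P.eval x * F x ^ i / F x ^ k) l (𝓝 0) := by
  obtain ⟨d, rfl⟩ := Nat.exists_eq_add_of_le hki
  set Q := P /ₘ (X - C x₀)
  have hQ : Tendsto (fun x => Q.eval x) l (𝓝 (Q.eval x₀)) :=
    (Q.continuous.tendsto x₀).mono_left hl
  refine (mul_zero (Q.eval x₀) ▸ hQ.mul (hF₀ d)).congr' ?_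
  filter_upwards [hF] with x hx
  rw [← mul_divByMonic_eq_iff_isRoot.mpr hP, eval_mul]
  simp only [eval_sub, eval_X, eval_C]
  field_simp
  ring

theorem not_eventually_sum_eval_mul_pow_eq_zero_of_not_isRoot (hl : l ≤ 𝓝 x₀) [l.NeBot]
    (hF : Tendsto F l atTop) (hF₀ : ∀ j : ℕ, Tendsto (fun x => (x - x₀) * F x ^ j) l (𝓝 0))
    {s : Finset ℕ} {P : ℕ → ℝ[X]} (hP : ∃ i ∈ s, ¬ (P i).IsRoot x₀) :
    ¬ ∀ᶠ x in l, ∑ i ∈ s, (P i).eval x * F x ^ i = 0 := by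
  classical
  have hne : (s.filter fun i => ¬ (P i).IsRoot x₀).Nonempty := by
    simpa [Finset.Nonempty] using hP
  set k := (s.filter fun i => ¬ (P i).IsRoot x₀).max' hne
  have hk : k ∈ s ∧ ¬ (P k).IsRoot x₀ := mem_filter.mp (max'_mem _ hne)
  have hlim : Tendsto (fun x => ∑ i ∈ s, (P i).eval x * F x ^ i / F x ^ k) l
      (𝓝 (∑ i ∈ s, if i = k then (P k).eval x₀ else 0)) := by
    refine tendsto_finsetSum s fun i hi => ?_
    rcases lt_trichotomy i k with hik | rfl | hki
    · simpa [hik.ne] using tendsto_eval_mul_pow_div_pow_of_lt hl hF (P i) hik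
    · simp only [if_true]
      refine ((P k).continuous.tendsto x₀ |>.mono_left hl).congr' ?_
      filter_upwards [hF.eventually_ne_atTop 0] with x hx
      rw [mul_div_cancel_right₀ _ (pow_ne_zero _ hx)]
    · have hroot : (P i).IsRoot x₀ := by
        by_contra h
        exact hki.not_ge (le_max' _ i (mem_filter.mpr ⟨hi, h⟩))
      simpa [hki.ne'] using tendsto_eval_mul_pow_div_pow_of_isRoot hl
        (hF.eventually_ne_atTop 0) hF₀ hroot hki.le
  rw [sum_ite_eq' s k, if_pos hk.1] at hlim
  intro hrel
  refine hk.2 (tendsto_nhds_unique hlim (tendsto_const_nhds.congr' ?_))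
  filter_upwards [hrel] with x hx
  rw [← sum_div, hx, zero_div]

theorem not_eventually_sum_eval_mul_pow_eq_zero (hl : l ≤ 𝓝[≠] x₀) [l.NeBot]
    (hF : Tendsto F l atTop) (hF₀ : ∀ j : ℕ, Tendsto (fun x => (x - x₀) * F x ^ j) l (𝓝 0))
    {s : Finset ℕ} {P : ℕ → ℝ[X]} (hP : ∃ i ∈ s, P i ≠ 0) :
    ¬ ∀ᶠ x in l, ∑ i ∈ s, (P i).eval x * F x ^ i = 0 := by
  obtain ⟨k, Q, hPQ, hQ⟩ := exists_eq_X_sub_C_pow_mul_not_isRoot hP x₀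
  refine fun hrel => not_eventually_sum_eval_mul_pow_eq_zero_of_not_isRoot
    (hl.trans nhdsWithin_le_nhds) hF hF₀ hQ ?_
  filter_upwards [hrel, hl self_mem_nhdsWithin] with x hx (hxx₀ : x ≠ x₀)
  have hsum : (x - x₀) ^ k * ∑ i ∈ s, (Q i).eval x * F x ^ i = 0 := by
    rw [← hx, mul_sum]
    refine sum_congr rfl fun i hi => ?_
    rw [hPQ i hi, eval_mul, eval_pow, eval_sub, eval_X, eval_C, mul_assoc]
  exact (mul_eq_zero.mp hsum).resolve_left (pow_ne_zero _ (sub_ne_zero.mpr hxx₀))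

end BlowUp

theorem Real.hasSum_pow_div_natCast {y : ℝ} (hy : |y| < 1) :
    HasSum (fun m : ℕ => y ^ m / m) (-Real.log (1 - y)) := by
  refine (hasSum_nat_add_iff' 1).mp ?_
  simpa using Real.hasSum_pow_div_log_of_abs_lt_one hy

theorem Real.tendsto_mul_log_pow_nhdsGT_zero (j : ℕ) :
    Tendsto (fun t => t * Real.log t ^ j) (𝓝[>] 0) (𝓝 0) := by
  have h := ((tendsto_pow_mul_exp_neg_atTop_nhds_zero j).comp
    (tendsto_neg_atBot_atTop.comp Real.tendsto_log_nhdsGT_zero)).const_mul ((-1) ^ j)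
  rw [mul_zero] at h
  refine h.congr' ?_
  filter_upwards [self_mem_nhdsWithin] with t (ht : 0 < t)
  simp only [Function.comp_apply, neg_neg, Real.exp_log ht, neg_pow (Real.log t)]
  rw [← mul_assoc, ← mul_assoc, ← mul_pow, neg_one_mul, neg_neg, one_pow, one_mul, mul_comm]

theorem tendsto_tsum_mul_pow_nhdsLT_atTop {a : ℕ → ℝ} (ha : ∀ m, 0 ≤ a m) {r : ℝ} (hr : 0 < r)
    (hsum : ∀ x ∈ Set.Ioo 0 r, Summable fun m => a m * x ^ m)
    (hdiv : ¬ Summable fun m => a m * r ^ m) :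
    Tendsto (fun x => ∑' m, a m * x ^ m) (𝓝[<] r) atTop := by
  refine tendsto_atTop.mpr fun K => ?_
  obtain ⟨N, hN⟩ := ((not_summable_iff_tendsto_nat_atTop_of_nonneg fun m =>
    mul_nonneg (ha m) (pow_nonneg hr.le m)).mp hdiv |>.eventually_gt_atTop K).exists
  have hpartial : Tendsto (fun x => ∑ m ∈ range N, a m * x ^ m) (𝓝[<] r)
      (𝓝 (∑ m ∈ range N, a m * r ^ m)) :=
    ((continuous_finsetSum _ fun m _ => by fun_prop).tendsto r).mono_left nhdsWithin_le_nhds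
  filter_upwards [hpartial.eventually_const_lt hN, Ioo_mem_nhdsLT hr] with x hKx hx
  exact hKx.le.trans <|
    (hsum x hx).sum_le_tsum _ fun m _ => mul_nonneg (ha m) (pow_nonneg hx.1.le m)

section Coefficients

variable {a : ℕ → ℝ} {ρ : ℝ}

theorem summable_mul_pow_of_isBigO (ha : a =O[atTop] fun m => ρ ^ m / m) {x : ℝ}
    (hx : |ρ * x| < 1) : Summable fun m => a m * x ^ m := by
  refine summable_of_isBigO_nat (Real.hasSum_pow_div_natCast hx).summable ?_
  refine (ha.mul (isBigO_refl (fun m : ℕ => x ^ m) atTop)).congr_right fun m => ?_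
  ring

theorem not_summable_mul_inv_pow_of_isBigO (ha : (fun m : ℕ => ρ ^ m / m) =O[atTop] a)
    (hρ : ρ ≠ 0) :
    ¬ Summable fun m => a m * ρ⁻¹ ^ m := fun hsum =>
  Real.not_summable_natCast_inv <| summable_of_isBigO_nat hsum <|
    (ha.mul (isBigO_refl (fun m : ℕ => ρ⁻¹ ^ m) atTop)).congr_left fun m => by
      rw [div_mul_eq_mul_div, ← mul_pow, mul_inv_cancel₀ hρ, one_pow, one_div]

theorem tendsto_one_sub_mul_nhdsLT_inv (hρ : 0 < ρ) :
    Tendsto (fun x => 1 - ρ * x) (𝓝[<] ρ⁻¹) (𝓝[>] 0) := by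
  refine tendsto_nhdsWithin_of_tendsto_nhds_of_eventually_within _ ?_ ?_
  · have h : Tendsto (fun x => 1 - ρ * x) (𝓝 ρ⁻¹) (𝓝 (1 - ρ * ρ⁻¹)) :=
      (continuous_const.sub (continuous_const.mul continuous_id)).tendsto _
    simpa [mul_inv_cancel₀ hρ.ne'] using h.mono_left nhdsWithin_le_nhds
  · filter_upwards [self_mem_nhdsWithin] with x (hx : x < ρ⁻¹)
    have := mul_lt_mul_of_pos_left hx hρ
    rw [mul_inv_cancel₀ hρ.ne'] at this
    exact sub_pos.mpr this

theorem abs_mul_lt_one_of_mem_Ico (hρ : 0 < ρ) {x : ℝ} (hx : x ∈ Set.Ico 0 ρ⁻¹) :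
    |ρ * x| < 1 := by
  rw [abs_of_nonneg (mul_nonneg hρ.le hx.1)]
  simpa [mul_inv_cancel₀ hρ.ne'] using mul_lt_mul_of_pos_left hx.2 hρ

variable (ha₀ : ∀ m, 0 ≤ a m) (hρ : 0 < ρ)
include ha₀ hρ

theorem exists_tsum_mul_pow_le_neg_log (ha : a =O[atTop] fun m => ρ ^ m / m) :
    ∃ C c : ℝ, ∀ x ∈ Set.Ico 0 ρ⁻¹, ∑' m, a m * x ^ m ≤ C + c * -Real.log (1 - ρ * x) := by
  obtain ⟨c, hc₀, hc⟩ := ha.exists_pos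
  obtain ⟨N, hN⟩ := eventually_atTop.mp hc.bound
  refine ⟨∑ m ∈ range N, a m * ρ⁻¹ ^ m, c, fun x hx => ?_⟩
  have hρx := abs_mul_lt_one_of_mem_Ico hρ hx
  have hhead : HasSum (fun m => if m ∈ range N then a m * ρ⁻¹ ^ m else 0)
      (∑ m ∈ range N, a m * ρ⁻¹ ^ m) := by
    simpa only [sum_ite_mem, inter_self] using
      hasSum_sum_of_ne_finset_zero (s := range N) fun m hm => if_neg hm
  refine hasSum_le (fun m => ?_) (summable_mul_pow_of_isBigO ha hρx).hasSum
    (hhead.add ((Real.hasSum_pow_div_natCast hρx).mul_left c))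
  have htail : 0 ≤ c * ((ρ * x) ^ m / m) := by
    have := mul_nonneg hρ.le hx.1
    positivity
  split_ifs with hmN
  · have : a m * x ^ m ≤ a m * ρ⁻¹ ^ m :=
      mul_le_mul_of_nonneg_left (pow_le_pow_left₀ hx.1 hx.2.le m) (ha₀ m)
    linarith
  · have hm := hN m (by simpa using hmN)
    rw [Real.norm_of_nonneg (ha₀ m), Real.norm_of_nonneg (by positivity)] at hm
    calc a m * x ^ m ≤ c * (ρ ^ m / m) * x ^ m :=
          mul_le_mul_of_nonneg_right hm (pow_nonneg hx.1 m)
      _ = 0 + c * ((ρ * x) ^ m / m) := by ring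

theorem isBigO_tsum_mul_pow_log (ha : a =O[atTop] fun m => ρ ^ m / m) :
    (fun x => ∑' m, a m * x ^ m) =O[𝓝[<] ρ⁻¹] fun x => Real.log (1 - ρ * x) := by
  obtain ⟨C, c, hle⟩ := exists_tsum_mul_pow_le_neg_log ha₀ hρ ha
  have hlog : Tendsto (fun x => Real.log (1 - ρ * x)) (𝓝[<] ρ⁻¹) atBot :=
    Real.tendsto_log_nhdsGT_zero.comp (tendsto_one_sub_mul_nhdsLT_inv hρ)
  have hbound : (fun x => C + c * -Real.log (1 - ρ * x)) =O[𝓝[<] ρ⁻¹]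
      fun x => Real.log (1 - ρ * x) :=
    (isLittleO_const_left.mpr (Or.inr (tendsto_abs_atBot_atTop.comp hlog))).isBigO.add
      ((isBigO_refl _ _).neg_left.const_mul_left c)
  refine IsBigO.trans (IsBigO.of_bound' ?_) hbound
  filter_upwards [Ioo_mem_nhdsLT (inv_pos.mpr hρ)] with x hx
  have h₀ : 0 ≤ ∑' m, a m * x ^ m :=
    tsum_nonneg fun m => mul_nonneg (ha₀ m) (pow_nonneg hx.1.le m)
  rw [Real.norm_of_nonneg h₀]
  exact (hle x (Set.Ioo_subset_Ico_self hx)).trans (Real.le_norm_self _)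

theorem tendsto_sub_mul_tsum_mul_pow_pow (ha : a =O[atTop] fun m => ρ ^ m / m) (j : ℕ) :
    Tendsto (fun x => (x - ρ⁻¹) * (∑' m, a m * x ^ m) ^ j) (𝓝[<] ρ⁻¹) (𝓝 0) := by
  have hlin : (fun x => x - ρ⁻¹) =O[𝓝[<] ρ⁻¹] fun x => 1 - ρ * x :=
    (isBigO_refl (fun x => 1 - ρ * x) _).const_mul_left (-ρ⁻¹) |>.congr_left fun x => by
      field_simp
      ring
  refine (hlin.mul ((isBigO_tsum_mul_pow_log ha₀ hρ ha).pow j)).trans_tendsto ?_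
  exact (Real.tendsto_mul_log_pow_nhdsGT_zero j).comp (tendsto_one_sub_mul_nhdsLT_inv hρ)

theorem sum_coe_mul_mk_pow_ne_zero (ha : a =Θ[atTop] fun m => ρ ^ m / m) {s : Finset ℕ}
    {P : ℕ → ℝ[X]} (hP : ∃ i ∈ s, P i ≠ 0) :
    ∑ i ∈ s, (P i : PowerSeries ℝ) * PowerSeries.mk a ^ i ≠ 0 := by
  have hsum : ∀ x ∈ Set.Ioo 0 ρ⁻¹, Summable fun m => a m * x ^ m := fun x hx =>
    summable_mul_pow_of_isBigO ha.isBigO <|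
      abs_mul_lt_one_of_mem_Ico hρ (Set.Ioo_subset_Ico_self hx)
  intro hrel
  refine not_eventually_sum_eval_mul_pow_eq_zero (nhdsLT_le_nhdsNE ρ⁻¹)
    (tendsto_tsum_mul_pow_nhdsLT_atTop ha₀ (inv_pos.mpr hρ) hsum
      (not_summable_mul_inv_pow_of_isBigO ha.symm.isBigO hρ.ne'))
    (tendsto_sub_mul_tsum_mul_pow_pow ha₀ hρ ha.isBigO) hP ?_
  filter_upwards [Ioo_mem_nhdsLT (inv_pos.mpr hρ)] with x hx
  have hg : (PowerSeries.mk a).SummableNormAt x := by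
    simpa [PowerSeries.SummableNormAt,
      Real.norm_of_nonneg (mul_nonneg (ha₀ _) (pow_nonneg hx.1.le _))] using hsum x hx
  simpa [PowerSeries.tsumEval, hrel] using (PowerSeries.tsumEval_sum_coe_mul_pow s P hg).symm

end Coefficients

theorem stmt15_general (a : ℕ → ℕ)
    (hasym : Filter.Tendsto
      (fun m : ℕ => (a m : ℝ) / ((2 / (m : ℝ)) * ((1 + Real.sqrt 5) / 2) ^ m))
      Filter.atTop (nhds 1)) :
    ¬ ∃ (n : ℕ) (p : ℕ → Polynomial ℚ), (∃ i ≤ n, p i ≠ 0) ∧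
      ∑ i ∈ Finset.range (n + 1),
        (Polynomial.coeToPowerSeries.ringHom (p i))
          * (PowerSeries.mk fun m => (a m : ℚ)) ^ i = 0 := by
  rintro ⟨n, p, ⟨i, hin, hi⟩, hrel⟩
  set ρ := (1 + Real.sqrt 5) / 2
  have hρ : 0 < ρ := by positivity
  have ha : (fun m => (a m : ℝ)) =Θ[atTop] fun m => ρ ^ m / m := by
    have h := (isEquivalent_of_tendsto_one hasym).isTheta
    rw [show (fun m : ℕ => 2 / (m : ℝ) * ρ ^ m) = fun m : ℕ => 2 * (ρ ^ m / (m : ℝ)) by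
      funext m; ring] at h
    exact (isTheta_const_mul_right two_ne_zero).mp h
  refine sum_coe_mul_mk_pow_ne_zero (fun m => (a m).cast_nonneg) hρ ha (s := range (n + 1))
    (P := fun i => (p i).map (algebraMap ℚ ℝ)) ⟨i, mem_range.mpr (by omega), map_ne_zero hi⟩ ?_
  have hmk : PowerSeries.map (algebraMap ℚ ℝ) (PowerSeries.mk fun m => (a m : ℚ)) =
      PowerSeries.mk fun m => (a m : ℝ) := by
    ext m
    simp
  simpa [hmk] using congrArg (PowerSeries.map (algebraMap ℚ ℝ)) hrel

/-- a power series `f = Σ_{m≥1} a_m z^m` with natural number coefficients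
satisfying the asymptotics `a_m ∼ (2/m)·((1+√5)/2)^m` is transcendental over `ℚ(z)`:
it satisfies no nonzero polynomial equation with polynomial (equivalently, rational
function) coefficients. -/
theorem stmt15 (a : ℕ → ℕ) (h0 : a 0 = 0)
    (hasym : Filter.Tendsto
      (fun m : ℕ => (a m : ℝ) / ((2 / (m : ℝ)) * ((1 + Real.sqrt 5) / 2) ^ m))
      Filter.atTop (nhds 1)) :
    ¬ ∃ (n : ℕ) (p : ℕ → Polynomial ℚ), (∃ i ≤ n, p i ≠ 0) ∧
      ∑ i ∈ Finset.range (n + 1),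
        (Polynomial.coeToPowerSeries.ringHom (p i))
          * (PowerSeries.mk fun m => (a m : ℚ)) ^ i = 0 :=
  stmt15_general a hasym
end

section
/- The conjugacy growth series of G ≀ C_2 with respect to the generating set {(y⃗, e') : y ∈ Y} ∪ {(e⃗, b)} equals σ(z) + z·σ(z) + (z²/2)·((σ(z)−1)² + σ(z²) − 1), where σ(z) = conjugacy growth series of (G, Y). -/
/-!
Conjugacy in `G ≀ C₂` is detected by `wrC2ClassOf`: with the swap, `((g, h), b)` is determined up
to conjugacy by the class of `g * h`; without it, `((g, h), 1)` is determined by the unordered pair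
of classes `{[g], [h]}`. A word for `((g, h), s)` spells `g` while the cursor is on the first
coordinate and `h` while it is on the second, so a shortest one has length
`|g| + |h| + wrC2SwapCount h s`. Minimising over conjugates,
the classes of the first kind have length `|[gh]| + 1` and contribute `z σ(z)`; the pairs
`{1, c}` have length `|c|` and contribute `σ(z)`; the pairs of nontrivial classes have length
`|c| + |d| + 2`. Since ordered pairs count off-diagonal unordered pairs twice and diagonal ones
once, the latter contribute `z² (τ(z)² + τ(z²)) / 2` with `τ = σ - 1`.
-/

section

variable {G : Type*} [Group G]

/-- Word length of `g ∈ G` with respect to a generating set `Y`. -/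
noncomputable def wordLen (Y : Set G) (g : G) : ℕ :=
  sInf {n | ∃ w : List G, w.length = n ∧ (∀ x ∈ w, x ∈ Y) ∧ w.prod = g}

/-- Conjugacy length of a conjugacy class of `G`: minimal word length of its elements. -/
noncomputable def conjLen (Y : Set G) (c : ConjClasses G) : ℕ :=
  sInf {n | ∃ g : G, ConjClasses.mk g = c ∧ wordLen Y g = n}

/-- Number of conjugacy classes of `G` of conjugacy length `m` w.r.t. `Y`. -/
noncomputable def conjCount (Y : Set G) (m : ℕ) : ℕ :=
  Nat.card {c : ConjClasses G // conjLen Y c = m}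

/-- Multiplication of `G ≀ C₂ = (G × G) ⋊ C₂`, where the nontrivial element `true` of
`C₂` swaps the two coordinates. -/
def wrC2Mul : ((G × G) × Bool) → ((G × G) × Bool) → ((G × G) × Bool) :=
  fun p q =>
    (if p.2 then (p.1.1 * q.1.2, p.1.2 * q.1.1) else (p.1.1 * q.1.1, p.1.2 * q.1.2),
      Bool.xor p.2 q.2)

/-- The natural generating set of `G ≀ C₂` built from a generating set `Y` of `G`:
copies of the generators of `G` in the first coordinate, plus the swap generator. -/
def wrC2Gens (Y : Set G) : Set ((G × G) × Bool) :=
  {p | (∃ y ∈ Y, p = ((y, 1), false)) ∨ p = (((1 : G), (1 : G)), true)}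

/-- Word length in `G ≀ C₂` w.r.t. the natural generating set. -/
noncomputable def wrC2Len (Y : Set G) (g : (G × G) × Bool) : ℕ :=
  sInf {n | ∃ w : List ((G × G) × Bool), w.length = n ∧ (∀ x ∈ w, x ∈ wrC2Gens Y) ∧
    w.foldr wrC2Mul (((1 : G), (1 : G)), false) = g}

/-- Conjugacy in `G ≀ C₂`. -/
def wrC2Conj (g h : (G × G) × Bool) : Prop :=
  ∃ x : (G × G) × Bool, wrC2Mul x g = wrC2Mul h x

/-- Conjugacy length in `G ≀ C₂`. -/
noncomputable def wrC2ConjLen (Y : Set G) (g : (G × G) × Bool) : ℕ :=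
  sInf {n | ∃ h : (G × G) × Bool, wrC2Conj g h ∧ wrC2Len Y h = n}

/-- Number of conjugacy classes of `G ≀ C₂` of conjugacy length `m`. -/
noncomputable def wrC2ConjCount (Y : Set G) (m : ℕ) : ℕ :=
  Nat.card {c : Quot (wrC2Conj (G := G)) //
    ∃ g : (G × G) × Bool, Quot.mk wrC2Conj g = c ∧ wrC2ConjLen Y g = m}

end


open PowerSeries Finset

section Counting

variable {α β : Type*}

theorem Finite.subtype_of_imp {p q : α → Prop} [Finite {a // p a}] (h : ∀ a, q a → p a) :
    Finite {a // q a} :=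
  .of_injective (Subtype.map id h) (Subtype.map_injective h Function.injective_id)

theorem Nat.card_subtype_eq_card_and_add_card_and_not (p q : α → Prop) [Finite {a // p a}] :
    Nat.card {a // p a} = Nat.card {a // p a ∧ q a} + Nat.card {a // p a ∧ ¬ q a} := by
  classical
  have : Finite {a // p a ∧ q a} := .subtype_of_imp fun _ h => h.1
  have : Finite {a // p a ∧ ¬ q a} := .subtype_of_imp fun _ h => h.1
  rw [← Nat.card_sum]
  exact Nat.card_congr <| (Equiv.sumCompl fun a : {a // p a} => q a).symm.trans <|
    (Equiv.subtypeSubtypeEquivSubtypeInter p q).sumCongr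
      (Equiv.subtypeSubtypeEquivSubtypeInter p fun a => ¬ q a)

theorem Sym2.two_mul_card_subtype (Q : Sym2 α → Prop) [Finite {p : α × α // Q s(p.1, p.2)}] :
    2 * Nat.card {z // Q z}
      = Nat.card {p : α × α // Q s(p.1, p.2)} + Nat.card {a // Q s(a, a)} := by
  classical
  let : LinearOrder α := linearOrderOfSTO WellOrderingRel
  have hsorted : Nat.card {z // Q z} = Nat.card {p : α × α // Q s(p.1, p.2) ∧ p.1 ≤ p.2} :=
    Nat.card_congr <| Equiv.trans
      (Equiv.subtypeEquiv (p := Q) (q := fun p => Q s(p.1.1, p.1.2)) Sym2.sortEquiv fun z => by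
        conv_lhs => rw [← Sym2.sortEquiv.symm_apply_apply z]
        rfl)
      ((Equiv.subtypeSubtypeEquivSubtypeInter (fun p : α × α => p.1 ≤ p.2)
        fun p => Q s(p.1, p.2)).trans (Equiv.subtypeEquivRight fun _ => and_comm))
  have hswap : Nat.card {p : α × α // Q s(p.1, p.2) ∧ ¬ p.1 ≤ p.2}
      = Nat.card {p : α × α // (Q s(p.1, p.2) ∧ p.1 ≤ p.2) ∧ ¬ p.1 = p.2} :=
    Nat.card_congr <| (Equiv.prodComm α α).subtypeEquiv fun p => by
      rw [Sym2.eq_swap]; simp only [Equiv.prodComm_apply, Prod.fst_swap, Prod.snd_swap, not_le]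
      constructor
      · rintro ⟨hq, hlt⟩; exact ⟨⟨hq, hlt.le⟩, hlt.ne⟩
      · rintro ⟨⟨hq, hle⟩, hne⟩; exact ⟨hq, lt_of_le_of_ne hle hne⟩
  have hdiag : Nat.card {p : α × α // (Q s(p.1, p.2) ∧ p.1 ≤ p.2) ∧ p.1 = p.2}
      = Nat.card {a // Q s(a, a)} :=
    Nat.card_congr
      { toFun := fun p => ⟨p.1.1, by obtain ⟨⟨a, b⟩, ⟨hq, -⟩, rfl : a = b⟩ := p; exact hq⟩
        invFun := fun a => ⟨(a, a), ⟨a.2, le_rfl⟩, rfl⟩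
        left_inv := by rintro ⟨⟨a, b⟩, -, rfl : a = b⟩; rfl
        right_inv := fun _ => rfl }
  have : Finite {p : α × α // Q s(p.1, p.2) ∧ p.1 ≤ p.2} :=
    .subtype_of_imp (p := fun p : α × α => Q s(p.1, p.2)) fun _ h => h.1
  have := Nat.card_subtype_eq_card_and_add_card_and_not (fun p : α × α => Q s(p.1, p.2))
    fun p => p.1 ≤ p.2
  have := Nat.card_subtype_eq_card_and_add_card_and_not
    (fun p : α × α => Q s(p.1, p.2) ∧ p.1 ≤ p.2) fun p => p.1 = p.2
  omega

noncomputable def weightSeries (w : α → ℕ) : PowerSeries ℚ :=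
  PowerSeries.mk fun n => (Nat.card {a // w a = n} : ℚ)

@[simp]
theorem coeff_weightSeries (w : α → ℕ) (n : ℕ) :
    coeff n (weightSeries w) = Nat.card {a // w a = n} :=
  coeff_mk _ _

theorem weightSeries_congr {w : α → ℕ} {v : β → ℕ} (e : α ≃ β) (h : ∀ a, v (e a) = w a) :
    weightSeries v = weightSeries w := by
  ext n
  simp only [coeff_weightSeries]
  exact congrArg _ (Nat.card_congr (e.subtypeEquiv fun a => by rw [h])).symm

theorem weightSeries_sumElim {w : α → ℕ} {v : β → ℕ} (hw : ∀ n, Finite {a // w a = n})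
    (hv : ∀ n, Finite {b // v b = n}) :
    weightSeries (Sum.elim w v) = weightSeries w + weightSeries v := by
  ext n
  simp only [coeff_weightSeries, map_add, ← Nat.cast_add, ← Nat.card_sum]
  exact congrArg _ (Nat.card_congr Equiv.subtypeSum)

theorem weightSeries_add_const (w : α → ℕ) (k : ℕ) :
    weightSeries (fun a => w a + k) = X ^ k * weightSeries w := by
  ext n
  rw [coeff_X_pow_mul', coeff_weightSeries]
  split_ifs with hk
  · rw [coeff_weightSeries]
    exact congrArg _ (Nat.card_congr (Equiv.subtypeEquivRight fun a => by omega))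
  · have : IsEmpty {a // w a + k = n} := ⟨fun a => hk (by omega)⟩
    simp

theorem weightSeries_two_mul (w : α → ℕ) :
    weightSeries (fun a => 2 * w a) = expand 2 two_ne_zero (weightSeries w) := by
  ext n
  rw [coeff_expand, coeff_weightSeries]
  split_ifs with hn
  · obtain ⟨m, rfl⟩ := hn
    rw [coeff_weightSeries, Nat.mul_div_cancel_left m two_pos]
    exact congrArg _ (Nat.card_congr (Equiv.subtypeEquivRight fun a => by omega))
  · have : IsEmpty {a // 2 * w a = n} := ⟨fun a => hn ⟨_, a.2.symm⟩⟩
    simp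

theorem weightSeries_option {w : α → ℕ} (hw : ∀ n, Finite {a // w a = n}) :
    weightSeries (fun o : Option α => o.elim 0 w) = 1 + weightSeries w := by
  have hunit : weightSeries (fun _ : Unit => 0) = 1 := by
    ext n
    rw [coeff_weightSeries, coeff_one]
    split_ifs with hn
    · subst hn; simp
    · have : IsEmpty {_a : Unit // 0 = n} := ⟨fun a => hn a.2.symm⟩
      rw [Nat.card_of_isEmpty, Nat.cast_zero]
  rw [← hunit, add_comm, ← weightSeries_sumElim hw fun _ => Subtype.finite]
  exact weightSeries_congr (Equiv.optionEquivSumPUnit.{0} α).symm (by rintro (a | a) <;> rfl)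

def addFiberEquiv (w : α → ℕ) (v : β → ℕ) (n : ℕ) :
    {p : α × β // w p.1 + v p.2 = n} ≃
      Σ ij : antidiagonal n, {a // w a = ij.1.1} × {b // v b = ij.1.2} where
  toFun p := ⟨⟨(w p.1.1, v p.1.2), mem_antidiagonal.mpr p.2⟩, ⟨p.1.1, rfl⟩, ⟨p.1.2, rfl⟩⟩
  invFun x := ⟨(x.2.1, x.2.2), by rw [x.2.1.2, x.2.2.2]; exact mem_antidiagonal.mp x.1.2⟩
  left_inv _ := rfl
  right_inv := by
    rintro ⟨⟨⟨i, j⟩, hij⟩, ⟨a, ha⟩, ⟨b, hb⟩⟩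
    dsimp only at ha hb
    subst ha hb
    rfl

theorem finite_addFiber {w : α → ℕ} {v : β → ℕ} (hw : ∀ n, Finite {a // w a = n})
    (hv : ∀ n, Finite {b // v b = n}) (n : ℕ) : Finite {p : α × β // w p.1 + v p.2 = n} :=
  .of_equiv _ (addFiberEquiv w v n).symm

theorem weightSeries_prod {w : α → ℕ} {v : β → ℕ} (hw : ∀ n, Finite {a // w a = n})
    (hv : ∀ n, Finite {b // v b = n}) :
    weightSeries (fun p : α × β => w p.1 + v p.2) = weightSeries w * weightSeries v := by
  ext n
  rw [coeff_weightSeries, coeff_mul, Nat.card_congr (addFiberEquiv w v n), Nat.card_sigma,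
    ← Finset.sum_coe_sort (antidiagonal n)]
  push_cast [Nat.card_prod, coeff_weightSeries]
  rfl

def sym2Weight (w : α → ℕ) : Sym2 α → ℕ :=
  Sym2.lift ⟨fun a b => w a + w b, fun _ _ => add_comm _ _⟩

@[simp]
theorem sym2Weight_mk (w : α → ℕ) (a b : α) : sym2Weight w s(a, b) = w a + w b := rfl

theorem weightSeries_sym2Weight {w : α → ℕ} (hw : ∀ n, Finite {a // w a = n}) :
    weightSeries (sym2Weight w)
      = C (1 / 2 : ℚ) * (weightSeries w ^ 2 + expand 2 two_ne_zero (weightSeries w)) := by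
  have hdouble : C (2 : ℚ) * weightSeries (sym2Weight w)
      = weightSeries w ^ 2 + expand 2 two_ne_zero (weightSeries w) := by
    rw [sq, ← weightSeries_prod hw hw, ← weightSeries_two_mul]
    ext n
    have : Finite {p : α × α // sym2Weight w s(p.1, p.2) = n} := finite_addFiber hw hw n
    rw [coeff_C_mul, map_add, coeff_weightSeries, coeff_weightSeries, coeff_weightSeries]
    have := Sym2.two_mul_card_subtype fun z => sym2Weight w z = n
    rw [Nat.card_congr (Equiv.subtypeEquivRight fun a => by rw [two_mul] :
      {a // 2 * w a = n} ≃ {a // w a + w a = n})]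
    exact_mod_cast this
  rw [← hdouble, ← mul_assoc, ← map_mul]
  norm_num

theorem finite_fiber_add_const {w : α → ℕ} (hw : ∀ n, Finite {a // w a = n}) (k n : ℕ) :
    Finite {a // w a + k = n} :=
  .subtype_of_imp (p := fun a => w a = n - k) fun _ _ => by omega

theorem finite_fiber_subtype {w : α → ℕ} (hw : ∀ n, Finite {a // w a = n}) (p : α → Prop)
    (n : ℕ) : Finite {a : {a // p a} // w a = n} :=
  .of_injective (Subtype.map (q := fun a => w a = n) Subtype.val fun _ h => h)
    (Subtype.map_injective _ Subtype.val_injective)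

theorem finite_fiber_sumElim {w : α → ℕ} {v : β → ℕ} (hw : ∀ n, Finite {a // w a = n})
    (hv : ∀ n, Finite {b // v b = n}) (n : ℕ) : Finite {x // Sum.elim w v x = n} :=
  have := hw n
  have := hv n
  .of_equiv ({a // w a = n} ⊕ {b // v b = n})
    (Equiv.subtypeSum (p := (Sum.elim w v · = n))).symm

theorem finite_sym2Weight_fiber {w : α → ℕ} (hw : ∀ n, Finite {a // w a = n}) (n : ℕ) :
    Finite {z // sym2Weight w z = n} :=
  have := finite_addFiber hw hw n
  .of_surjective (fun p : {p : α × α // w p.1 + w p.2 = n} =>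
    (⟨s(p.1.1, p.1.2), p.2⟩ : {z // sym2Weight w z = n})) fun ⟨z, hz⟩ => by
    induction z with | _ a b => exact ⟨⟨(a, b), hz⟩, rfl⟩

end Counting

noncomputable def Sym2.sumSubtypeNeEquiv {α : Type*} (a : α) : α ⊕ Sym2 {b // b ≠ a} ≃ Sym2 α :=
  Equiv.ofBijective (Sum.elim (fun b => s(a, b)) (Sym2.map Subtype.val)) <| by
    have not_mem (z : Sym2 {b // b ≠ a}) : a ∉ z.map Subtype.val := by
      rw [Sym2.mem_map]; rintro ⟨b, -, hb⟩; exact b.2 hb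
    refine ⟨?_, ?_⟩
    · rintro (b | z) (b' | z') h <;> simp only [Sum.elim_inl, Sum.elim_inr] at h
      · rw [Sym2.congr_right.mp h]
      · exact absurd (h ▸ Sym2.mem_mk_left a b) (not_mem z')
      · exact absurd (h ▸ Sym2.mem_mk_left a b') (not_mem z)
      · rw [Sym2.map.injective Subtype.val_injective h]
    · intro z
      induction z with | _ x y => ?_
      by_cases hx : x = a
      · exact ⟨.inl y, by rw [hx]; rfl⟩
      by_cases hy : y = a
      · exact ⟨.inl x, by rw [hy]; exact Sym2.eq_swap⟩
      exact ⟨.inr s(⟨x, hx⟩, ⟨y, hy⟩), rfl⟩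

@[simp]
theorem Sym2.sumSubtypeNeEquiv_inr {α : Type*} (a : α) (z : Sym2 {b // b ≠ a}) :
    sumSubtypeNeEquiv a (.inr z) = z.map Subtype.val :=
  rfl

section WordLength

variable {G : Type*} [Group G] {Y : Set G}

theorem wordLen_prod_le_length {w : List G} (hw : ∀ x ∈ w, x ∈ Y) :
    wordLen Y w.prod ≤ w.length :=
  Nat.sInf_le ⟨w, rfl, hw, rfl⟩

theorem exists_length_eq_wordLen (hY : Submonoid.closure Y = ⊤) (g : G) :
    ∃ w : List G, w.length = wordLen Y g ∧ (∀ x ∈ w, x ∈ Y) ∧ w.prod = g := by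
  obtain ⟨w, hw, rfl⟩ := Submonoid.exists_list_of_mem_closure (hY ▸ Submonoid.mem_top g)
  exact Nat.sInf_mem
    (s := {n | ∃ v : List G, v.length = n ∧ (∀ x ∈ v, x ∈ Y) ∧ v.prod = w.prod})
    ⟨_, w, rfl, hw, rfl⟩

theorem wordLen_one : wordLen Y (1 : G) = 0 :=
  Nat.le_zero.mp (wordLen_prod_le_length (w := []) (by simp))

theorem wordLen_le_one {y : G} (hy : y ∈ Y) : wordLen Y y ≤ 1 := by
  simpa using wordLen_prod_le_length (w := [y]) (by simpa)

theorem wordLen_mul_le (hY : Submonoid.closure Y = ⊤) (g h : G) :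
    wordLen Y (g * h) ≤ wordLen Y g + wordLen Y h := by
  obtain ⟨u, hu, huY, rfl⟩ := exists_length_eq_wordLen hY g
  obtain ⟨v, hv, hvY, rfl⟩ := exists_length_eq_wordLen hY h
  rw [← hu, ← hv, ← List.length_append, ← List.prod_append]
  exact wordLen_prod_le_length fun x hx => (List.mem_append.mp hx).elim (huY x) (hvY x)

theorem conjLen_mk_le_wordLen (g : G) : conjLen Y (ConjClasses.mk g) ≤ wordLen Y g :=
  Nat.sInf_le ⟨g, rfl, rfl⟩

theorem exists_wordLen_eq_conjLen (c : ConjClasses G) :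
    ∃ g, ConjClasses.mk g = c ∧ wordLen Y g = conjLen Y c := by
  obtain ⟨g, rfl⟩ := ConjClasses.mk_surjective c
  exact Nat.sInf_mem (s := {n | ∃ h, ConjClasses.mk h = ConjClasses.mk g ∧ wordLen Y h = n})
    ⟨_, g, rfl, rfl⟩

theorem conjLen_one : conjLen Y (ConjClasses.mk (1 : G)) = 0 :=
  Nat.le_zero.mp (wordLen_one (Y := Y) ▸ conjLen_mk_le_wordLen 1)

theorem finite_conjLen_fiber (hY : Submonoid.closure Y = ⊤) (hYfin : Y.Finite) (n : ℕ) :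
    Finite {c : ConjClasses G // conjLen Y c = n} := by
  have : Finite Y := hYfin.to_subtype
  refine Set.Finite.to_subtype (s := {c | conjLen Y c = n}) <|
    ((List.finite_length_eq Y n).image fun l => ConjClasses.mk (l.map Subtype.val).prod).subset ?_
  rintro c (hc : conjLen Y c = n)
  obtain ⟨g, rfl, hg⟩ := exists_wordLen_eq_conjLen (Y := Y) c
  obtain ⟨w, hlen, hw, rfl⟩ := exists_length_eq_wordLen hY g
  lift w to List Y using hw
  exact ⟨w, by simp_all, rfl⟩

end WordLength

section WreathProduct

variable {G : Type*} [Group G] {Y : Set G}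

@[simp]
theorem wrC2Mul_false (a b c d : G) (t : Bool) :
    wrC2Mul ((a, b), false) ((c, d), t) = ((a * c, b * d), t) := by
  simp [wrC2Mul]

@[simp]
theorem wrC2Mul_true (a b c d : G) (t : Bool) :
    wrC2Mul ((a, b), true) ((c, d), t) = ((a * d, b * c), !t) := by
  simp [wrC2Mul]

theorem wrC2Mul_assoc (x y z : (G × G) × Bool) :
    wrC2Mul (wrC2Mul x y) z = wrC2Mul x (wrC2Mul y z) := by
  obtain ⟨⟨a, b⟩, s⟩ := x
  obtain ⟨⟨c, d⟩, t⟩ := y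
  obtain ⟨⟨p, q⟩, u⟩ := z
  cases s <;> cases t <;> simp [mul_assoc]

def wrC2Prod (w : List ((G × G) × Bool)) : (G × G) × Bool :=
  w.foldr wrC2Mul ((1, 1), false)

@[simp]
theorem wrC2Prod_nil : wrC2Prod ([] : List ((G × G) × Bool)) = ((1, 1), false) := rfl

@[simp]
theorem wrC2Prod_cons (x : (G × G) × Bool) (w : List ((G × G) × Bool)) :
    wrC2Prod (x :: w) = wrC2Mul x (wrC2Prod w) := rfl

theorem wrC2Prod_append (u v : List ((G × G) × Bool)) :
    wrC2Prod (u ++ v) = wrC2Mul (wrC2Prod u) (wrC2Prod v) := by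
  induction u with
  | nil =>
    rw [List.nil_append, wrC2Prod_nil]
    generalize wrC2Prod v = x
    obtain ⟨⟨a, b⟩, s⟩ := x
    simp
  | cons x u ih => rw [List.cons_append, wrC2Prod_cons, wrC2Prod_cons, ih, wrC2Mul_assoc]

def wrC2Swap : (G × G) × Bool := ((1, 1), true)

def wrC2Embed (g : G) : (G × G) × Bool := ((g, 1), false)

theorem wrC2Swap_mem_wrC2Gens : wrC2Swap ∈ wrC2Gens Y := Or.inr rfl

theorem wrC2Prod_map_wrC2Embed (w : List G) :
    wrC2Prod (w.map wrC2Embed) = ((w.prod, 1), false) := by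
  induction w with
  | nil => rfl
  | cons y w ih => simp [ih, wrC2Embed]

theorem map_wrC2Embed_mem_wrC2Gens {w : List G} (hw : ∀ x ∈ w, x ∈ Y) :
    ∀ x ∈ w.map wrC2Embed, x ∈ wrC2Gens Y := by
  simp only [List.mem_map]
  rintro _ ⟨y, hy, rfl⟩
  exact Or.inl ⟨y, hw y hy, rfl⟩

open scoped Classical in
/-- The least number of swaps in a word reaching an element `((_, h), s)`: the cursor starts on
the first coordinate, must visit the second one if `h ≠ 1`, and must end on the side given by
`s`. -/
noncomputable def wrC2SwapCount (h : G) (s : Bool) : ℕ :=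
  if s then 1 else if h = 1 then 0 else 2

@[simp]
theorem wrC2SwapCount_true (h : G) : wrC2SwapCount h true = 1 := rfl

@[simp]
theorem wrC2SwapCount_one_false : wrC2SwapCount (1 : G) false = 0 := by
  simp [wrC2SwapCount]

theorem wrC2SwapCount_false_of_ne_one {h : G} (hh : h ≠ 1) : wrC2SwapCount h false = 2 := by
  simp [wrC2SwapCount, hh]

theorem wrC2SwapCount_not_le (g h : G) (s : Bool) :
    wrC2SwapCount g (!s) ≤ wrC2SwapCount h s + 1 := by
  unfold wrC2SwapCount; cases s <;> split_ifs <;> simp_all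

theorem wordLen_add_wrC2SwapCount_le_length (hY : Submonoid.closure Y = ⊤)
    {w : List ((G × G) × Bool)} (hw : ∀ x ∈ w, x ∈ wrC2Gens Y) {g h : G} {s : Bool}
    (he : wrC2Prod w = ((g, h), s)) :
    wordLen Y g + wordLen Y h + wrC2SwapCount h s ≤ w.length := by
  induction w generalizing g h s with
  | nil =>
    simp only [wrC2Prod_nil, Prod.mk.injEq] at he
    obtain ⟨⟨rfl, rfl⟩, rfl⟩ := he
    simp [wordLen_one, wrC2SwapCount]
  | cons x w ih =>
    rcases hprod : wrC2Prod w with ⟨⟨g', h'⟩, s'⟩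
    have hlen := ih (fun x hx => hw x (List.mem_cons_of_mem _ hx)) hprod
    rw [List.length_cons]
    rcases hw x List.mem_cons_self with ⟨y, hy, rfl⟩ | rfl
    · simp only [wrC2Prod_cons, hprod, wrC2Mul_false, one_mul, Prod.mk.injEq] at he
      obtain ⟨⟨rfl, rfl⟩, rfl⟩ := he
      have := wordLen_mul_le hY y g'
      have := wordLen_le_one hy
      omega
    · simp only [wrC2Prod_cons, hprod, wrC2Mul_true, one_mul, Prod.mk.injEq] at he
      obtain ⟨⟨rfl, rfl⟩, rfl⟩ := he
      have := wrC2SwapCount_not_le g' h' s'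
      omega

theorem exists_wrC2Prod_eq (hY : Submonoid.closure Y = ⊤) (g h : G) (s : Bool) :
    ∃ w, (∀ x ∈ w, x ∈ wrC2Gens Y) ∧ wrC2Prod w = ((g, h), s) ∧
      w.length = wordLen Y g + wordLen Y h + wrC2SwapCount h s := by
  obtain ⟨u, hu, huY, rfl⟩ := exists_length_eq_wordLen hY g
  obtain ⟨v, hv, hvY, rfl⟩ := exists_length_eq_wordLen hY h
  have hu' := map_wrC2Embed_mem_wrC2Gens huY
  have hv' := map_wrC2Embed_mem_wrC2Gens hvY
  have hswap := wrC2Swap_mem_wrC2Gens (Y := Y)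
  cases s
  · by_cases h1 : v.prod = 1
    · refine ⟨u.map wrC2Embed, hu', by rw [wrC2Prod_map_wrC2Embed, h1], ?_⟩
      simp [h1, wordLen_one, hu]
    · refine ⟨u.map wrC2Embed ++ wrC2Swap :: (v.map wrC2Embed ++ [wrC2Swap]), ?_, ?_, ?_⟩
      · simp only [List.mem_append, List.mem_cons, List.not_mem_nil, or_false]
        rintro x ((hx | rfl | hx | rfl))
        exacts [hu' x hx, hswap, hv' x hx, hswap]
      · simp [wrC2Prod_append, wrC2Prod_map_wrC2Embed, wrC2Swap]
      · simp [wrC2SwapCount_false_of_ne_one h1, hu, hv]; omega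
  · refine ⟨u.map wrC2Embed ++ wrC2Swap :: v.map wrC2Embed, ?_, ?_, ?_⟩
    · simp only [List.mem_append, List.mem_cons]
      rintro x ((hx | rfl | hx))
      exacts [hu' x hx, hswap, hv' x hx]
    · simp [wrC2Prod_append, wrC2Prod_map_wrC2Embed, wrC2Swap]
    · simp [hu, hv]; omega

theorem wrC2Len_eq (hY : Submonoid.closure Y = ⊤) (g h : G) (s : Bool) :
    wrC2Len Y ((g, h), s) = wordLen Y g + wordLen Y h + wrC2SwapCount h s := by
  obtain ⟨w, hw, he, hlen⟩ := exists_wrC2Prod_eq hY g h s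
  refine le_antisymm (Nat.sInf_le ⟨w, hlen, hw, he⟩) (le_csInf ⟨_, w, rfl, hw, he⟩ ?_)
  rintro _ ⟨w', rfl, hw', he'⟩
  exact wordLen_add_wrC2SwapCount_le_length hY hw' he'

end WreathProduct

section Conjugacy

variable {G : Type*} [Group G] {Y : Set G}

theorem wrC2Conj.snd_eq {x y : (G × G) × Bool} (h : wrC2Conj x y) : x.2 = y.2 := by
  obtain ⟨z, hz⟩ := h
  have := congrArg Prod.snd hz
  simp only [wrC2Mul] at this
  revert this
  cases z.2 <;> cases x.2 <;> cases y.2 <;> simp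

theorem wrC2Conj_false_iff (g h g' h' : G) :
    wrC2Conj ((g, h), false) ((g', h'), false) ↔
      s(ConjClasses.mk g, ConjClasses.mk h) = s(ConjClasses.mk g', ConjClasses.mk h') := by
  simp only [Sym2.eq_iff, ConjClasses.mk_eq_mk_iff_isConj]
  constructor
  · rintro ⟨⟨⟨a, b⟩, (_ | _)⟩, hz⟩ <;>
      simp only [wrC2Mul_false, wrC2Mul_true, Prod.mk.injEq] at hz
    · exact .inl ⟨⟨toUnits a, hz.1.1⟩, ⟨toUnits b, hz.1.2⟩⟩
    · exact .inr ⟨⟨toUnits b, hz.1.2⟩, ⟨toUnits a, hz.1.1⟩⟩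
  · rintro (⟨⟨a, ha⟩, ⟨b, hb⟩⟩ | ⟨⟨a, ha⟩, ⟨b, hb⟩⟩)
    · exact ⟨((a, b), false), by simp [ha.eq, hb.eq]⟩
    · exact ⟨((b, a), true), by simp [ha.eq, hb.eq]⟩

theorem wrC2Conj_true_iff (g h g' h' : G) :
    wrC2Conj ((g, h), true) ((g', h'), true) ↔ IsConj (g * h) (g' * h') := by
  constructor
  · rintro ⟨⟨⟨a, b⟩, (_ | _)⟩, hz⟩ <;>
      simp only [wrC2Mul_false, wrC2Mul_true, Prod.mk.injEq] at hz
    · refine ⟨toUnits a, ?_⟩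
      change a * (g * h) = g' * h' * a
      rw [← mul_assoc, hz.1.1, mul_assoc, hz.1.2, mul_assoc]
    · refine .trans (b := h' * g') ⟨toUnits b, ?_⟩ ⟨toUnits g', (mul_assoc _ _ _).symm⟩
      change b * (g * h) = h' * g' * b
      rw [← mul_assoc, hz.1.2, mul_assoc, hz.1.1, mul_assoc]
  · rintro ⟨c, hc⟩
    refine ⟨((c, g'⁻¹ * c * g), false), ?_⟩
    simp only [wrC2Mul_false, wrC2Mul_true, Prod.mk.injEq]
    refine ⟨⟨by group, ?_⟩, rfl⟩
    rw [mul_assoc (g'⁻¹ * c), mul_assoc g'⁻¹, hc.eq]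
    group

def wrC2ClassOf : (G × G) × Bool → ConjClasses G ⊕ Sym2 (ConjClasses G)
  | ((g, h), true) => .inl (ConjClasses.mk (g * h))
  | ((g, h), false) => .inr s(ConjClasses.mk g, ConjClasses.mk h)

theorem wrC2Conj_iff_wrC2ClassOf_eq (x y : (G × G) × Bool) :
    wrC2Conj x y ↔ wrC2ClassOf x = wrC2ClassOf y := by
  obtain ⟨⟨g, h⟩, s⟩ := x
  obtain ⟨⟨g', h'⟩, s'⟩ := y
  cases s <;> cases s'
  · rw [wrC2Conj_false_iff]; simp [wrC2ClassOf]
  · exact iff_of_false (fun hc => absurd hc.snd_eq (by simp)) (by simp [wrC2ClassOf])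
  · exact iff_of_false (fun hc => absurd hc.snd_eq (by simp)) (by simp [wrC2ClassOf])
  · rw [wrC2Conj_true_iff]; simp [wrC2ClassOf, ConjClasses.mk_eq_mk_iff_isConj]

theorem wrC2ClassOf_surjective : Function.Surjective (wrC2ClassOf (G := G)) := by
  rintro (c | z)
  · obtain ⟨g, rfl⟩ := ConjClasses.mk_surjective c
    exact ⟨((g, 1), true), by simp [wrC2ClassOf]⟩
  · induction z with | _ c d => ?_
    obtain ⟨g, rfl⟩ := ConjClasses.mk_surjective c
    obtain ⟨h, rfl⟩ := ConjClasses.mk_surjective d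
    exact ⟨((g, h), false), rfl⟩

noncomputable def wrC2ConjClassesEquiv :
    Quot (wrC2Conj (G := G)) ≃ ConjClasses G ⊕ Sym2 (ConjClasses G) :=
  Equiv.ofBijective (Quot.lift wrC2ClassOf fun x y => (wrC2Conj_iff_wrC2ClassOf_eq x y).mp) <| by
    refine ⟨fun q q' => ?_, fun z => ?_⟩
    · induction q using Quot.ind with | _ x => ?_
      induction q' using Quot.ind with | _ y => ?_
      exact fun h => Quot.sound ((wrC2Conj_iff_wrC2ClassOf_eq x y).mpr h)
    · obtain ⟨x, rfl⟩ := wrC2ClassOf_surjective z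
      exact ⟨Quot.mk _ x, rfl⟩

open scoped Classical in
/-- The `+ 2` is the cost of the cursor's round trip to the second coordinate, saved exactly
when one of the two classes is trivial and can be put there. -/
noncomputable def wrC2PairLen (Y : Set G) (z : Sym2 (ConjClasses G)) : ℕ :=
  sym2Weight (conjLen Y) z + if ConjClasses.mk 1 ∈ z then 0 else 2

noncomputable def wrC2ClassLen (Y : Set G) : ConjClasses G ⊕ Sym2 (ConjClasses G) → ℕ :=
  Sum.elim (fun c => conjLen Y c + 1) (wrC2PairLen Y)

theorem ConjClasses.mk_one_mem_sym2_mk_iff {g h : G} :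
    ConjClasses.mk 1 ∈ s(ConjClasses.mk g, ConjClasses.mk h) ↔ g = 1 ∨ h = 1 := by
  simp [Sym2.mem_iff, ConjClasses.mk_eq_mk_iff_isConj, eq_comm]

theorem wrC2PairLen_of_mem {z : Sym2 (ConjClasses G)} (hz : ConjClasses.mk 1 ∈ z) :
    wrC2PairLen Y z = sym2Weight (conjLen Y) z := by
  simp [wrC2PairLen, hz]

theorem wrC2PairLen_of_not_mem {z : Sym2 (ConjClasses G)} (hz : ConjClasses.mk 1 ∉ z) :
    wrC2PairLen Y z = sym2Weight (conjLen Y) z + 2 := by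
  simp [wrC2PairLen, hz]

theorem wrC2ClassLen_wrC2ClassOf_le_wrC2Len (hY : Submonoid.closure Y = ⊤)
    (x : (G × G) × Bool) :
    wrC2ClassLen Y (wrC2ClassOf x) ≤ wrC2Len Y x := by
  obtain ⟨⟨g, h⟩, (_ | _)⟩ := x <;> rw [wrC2Len_eq hY]
  · have hg := conjLen_mk_le_wordLen (Y := Y) g
    have hh := conjLen_mk_le_wordLen (Y := Y) h
    change wrC2PairLen Y _ ≤ _
    by_cases hm : ConjClasses.mk 1 ∈ s(ConjClasses.mk g, ConjClasses.mk h)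
    · rw [wrC2PairLen_of_mem hm, sym2Weight_mk]
      omega
    · have h1 : h ≠ 1 := fun h1 => hm (ConjClasses.mk_one_mem_sym2_mk_iff.mpr (.inr h1))
      rw [wrC2PairLen_of_not_mem hm, sym2Weight_mk, wrC2SwapCount_false_of_ne_one h1]
      omega
  · have := conjLen_mk_le_wordLen (Y := Y) (g * h)
    have := wordLen_mul_le hY g h
    change conjLen Y _ + 1 ≤ _
    rw [wrC2SwapCount_true]
    omega

theorem exists_wrC2ClassOf_eq_inr_and_wrC2Len_eq (hY : Submonoid.closure Y = ⊤)
    {c d : ConjClasses G} (hcd : c = ConjClasses.mk 1 → d = ConjClasses.mk 1) :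
    ∃ x, wrC2ClassOf x = .inr s(c, d) ∧ wrC2Len Y x = wrC2PairLen Y s(c, d) := by
  obtain ⟨g, rfl, hg⟩ := exists_wordLen_eq_conjLen (Y := Y) c
  obtain ⟨h, rfl, hh⟩ := exists_wordLen_eq_conjLen (Y := Y) d
  refine ⟨((g, h), false), rfl, ?_⟩
  rw [wrC2Len_eq hY, hg, hh]
  by_cases h1 : h = 1
  · subst h1
    rw [wrC2PairLen_of_mem (Sym2.mem_mk_right _ _), wrC2SwapCount_one_false, sym2Weight_mk,
      add_zero]
  · have hm : ConjClasses.mk 1 ∉ s(ConjClasses.mk g, ConjClasses.mk h) := by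
      rw [ConjClasses.mk_one_mem_sym2_mk_iff]
      rintro (hg1 | hh1)
      · exact h1 (by simpa [ConjClasses.mk_eq_mk_iff_isConj] using hcd (by rw [hg1]))
      · exact h1 hh1
    rw [wrC2PairLen_of_not_mem hm, wrC2SwapCount_false_of_ne_one h1, sym2Weight_mk]

theorem exists_wrC2ClassOf_eq_and_wrC2Len_eq (hY : Submonoid.closure Y = ⊤)
    (z : ConjClasses G ⊕ Sym2 (ConjClasses G)) :
    ∃ x, wrC2ClassOf x = z ∧ wrC2Len Y x = wrC2ClassLen Y z := by
  rcases z with c | z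
  · obtain ⟨g, rfl, hg⟩ := exists_wordLen_eq_conjLen (Y := Y) c
    refine ⟨((g, 1), true), by simp [wrC2ClassOf], ?_⟩
    simp [wrC2Len_eq hY, wrC2ClassLen, hg, wordLen_one]
  · induction z with | _ c d => ?_
    by_cases hcd : c = ConjClasses.mk 1 → d = ConjClasses.mk 1
    · exact exists_wrC2ClassOf_eq_inr_and_wrC2Len_eq hY hcd
    · rw [Sym2.eq_swap]
      exact exists_wrC2ClassOf_eq_inr_and_wrC2Len_eq hY fun hd => absurd (fun _ => hd) hcd

theorem wrC2ConjLen_eq (hY : Submonoid.closure Y = ⊤) (x : (G × G) × Bool) :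
    wrC2ConjLen Y x = wrC2ClassLen Y (wrC2ClassOf x) := by
  obtain ⟨y, hy, hlen⟩ := exists_wrC2ClassOf_eq_and_wrC2Len_eq hY (wrC2ClassOf x)
  have hxy := (wrC2Conj_iff_wrC2ClassOf_eq x y).mpr hy.symm
  refine le_antisymm (Nat.sInf_le ⟨y, hxy, hlen⟩) (le_csInf ⟨_, y, hxy, hlen⟩ ?_)
  rintro _ ⟨y', hy', rfl⟩
  rw [(wrC2Conj_iff_wrC2ClassOf_eq x y').mp hy']
  exact wrC2ClassLen_wrC2ClassOf_le_wrC2Len hY y'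

theorem wrC2ConjCount_eq (hY : Submonoid.closure Y = ⊤) (m : ℕ) :
    wrC2ConjCount Y m = Nat.card {z // wrC2ClassLen Y z = m} := by
  refine Nat.card_congr (wrC2ConjClassesEquiv.subtypeEquiv fun q => ?_)
  induction q using Quot.ind with | _ x => ?_
  refine ⟨?_, fun hx => ⟨x, rfl, (wrC2ConjLen_eq hY x).trans hx⟩⟩
  rintro ⟨y, hy, rfl⟩
  rw [wrC2ConjLen_eq hY, ← congrArg wrC2ConjClassesEquiv hy]
  rfl

theorem weightSeries_conjLen (hY : Submonoid.closure Y = ⊤) (hYfin : Y.Finite) :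
    weightSeries (conjLen Y)
      = 1 + weightSeries fun c : {c : ConjClasses G // c ≠ ConjClasses.mk 1} => conjLen Y c := by
  classical
  rw [← weightSeries_option (finite_fiber_subtype (finite_conjLen_fiber hY hYfin) _)]
  exact weightSeries_congr (Equiv.optionSubtypeNe _) fun
    | none => conjLen_one
    | some _ => rfl

theorem weightSeries_wrC2ClassLen (hY : Submonoid.closure Y = ⊤) (hYfin : Y.Finite) :
    weightSeries (wrC2ClassLen Y)
      = X * weightSeries (conjLen Y) + (weightSeries (conjLen Y) + X ^ 2 *
        weightSeries (sym2Weight fun c : {c : ConjClasses G // c ≠ ConjClasses.mk 1} =>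
          conjLen Y c)) := by
  have hfin := finite_conjLen_fiber hY hYfin
  have hfinN := finite_fiber_subtype hfin fun c => c ≠ ConjClasses.mk 1
  have hfinPairs := finite_fiber_add_const (finite_sym2Weight_fiber hfinN) 2
  -- The right side is the weight series of `Sum.elim (· + 1) (Sum.elim conjLen (· + 2))` on
  -- `C ⊕ (C ⊕ Sym2 {c // c ≠ 1})`, which `Sym2.sumSubtypeNeEquiv` turns into `wrC2ClassLen`.
  rw [← weightSeries_add_const, ← weightSeries_sumElim hfin hfinPairs,
    ← pow_one X, ← weightSeries_add_const,
    ← weightSeries_sumElim (finite_fiber_add_const hfin 1) (finite_fiber_sumElim hfin hfinPairs)]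
  refine weightSeries_congr ((Equiv.refl _).sumCongr (Sym2.sumSubtypeNeEquiv _)) ?_
  rintro (c | c | z)
  · rfl
  · exact (wrC2PairLen_of_mem (Sym2.mem_mk_left _ _)).trans (by simp [conjLen_one])
  · induction z with | _ a b => ?_
    refine wrC2PairLen_of_not_mem ?_
    simp only [Sym2.sumSubtypeNeEquiv_inr, Sym2.map_mk, Sym2.mem_iff, not_or]
    exact ⟨a.2.symm, b.2.symm⟩

end Conjugacy

theorem Submonoid.closure_eq_top_of_inv_mem {G : Type*} [Group G] {Y : Set G}
    (hYsymm : ∀ y ∈ Y, y⁻¹ ∈ Y) (hYgen : Subgroup.closure Y = ⊤) : Submonoid.closure Y = ⊤ := by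
  have := Subgroup.closure_toSubmonoid Y
  rwa [hYgen, Set.union_eq_self_of_subset_right fun y hy => inv_inv y ▸ hYsymm _ hy,
    Subgroup.top_toSubmonoid, eq_comm] at this

/-- for a group `G` with finite symmetric generating set `Y`, the
conjugacy growth series of `G ≀ C₂` with respect to the natural generating set equals
`σ(z) + z·σ(z) + (z²/2)·((σ(z)-1)² + σ(z²) - 1)` where `σ` is the conjugacy growth
series of `(G, Y)`. -/
theorem stmt16 {G : Type*} [Group G] (Y : Set G) (hYfin : Y.Finite)
    (hYsymm : ∀ y ∈ Y, y⁻¹ ∈ Y) (hYgen : Subgroup.closure Y = ⊤) :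
    (PowerSeries.mk fun m => (wrC2ConjCount Y m : ℚ))
      = (PowerSeries.mk fun m => (conjCount Y m : ℚ))
        + PowerSeries.X * (PowerSeries.mk fun m => (conjCount Y m : ℚ))
        + (PowerSeries.C (R := ℚ) (1 / 2) * PowerSeries.X ^ 2) *
          (((PowerSeries.mk fun m => (conjCount Y m : ℚ)) - 1) ^ 2
            + (PowerSeries.mk fun m =>
                if 2 ∣ m then (conjCount Y (m / 2) : ℚ) else 0) - 1) := by
  have hY := Submonoid.closure_eq_top_of_inv_mem hYsymm hYgen
  have hfinN := finite_fiber_subtype (finite_conjLen_fiber hY hYfin) fun c => c ≠ ConjClasses.mk 1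
  have hσ : (PowerSeries.mk fun m => (conjCount Y m : ℚ)) = weightSeries (conjLen Y) := rfl
  have hσ2 : (PowerSeries.mk fun m => if 2 ∣ m then (conjCount Y (m / 2) : ℚ) else 0)
      = expand 2 two_ne_zero (weightSeries (conjLen Y)) :=
    PowerSeries.ext fun m => by rw [coeff_mk, coeff_expand, coeff_weightSeries]; rfl
  have hLHS :
      (PowerSeries.mk fun m => (wrC2ConjCount Y m : ℚ)) = weightSeries (wrC2ClassLen Y) :=
    PowerSeries.ext fun m => by rw [coeff_mk, coeff_weightSeries, wrC2ConjCount_eq hY]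
  rw [hLHS, hσ, hσ2, weightSeries_wrC2ClassLen hY hYfin, weightSeries_sym2Weight hfinN,
    weightSeries_conjLen hY hYfin, map_add, map_one]
  ring
end
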